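/- arXiv:math/0508638 — 5 statements merged into one kernel-verified Lean document; each statement's English description precedes it below -/
import Mathlib

section
/- The diagonal crossed product A ⋈ H is an associative algebra with unit 1_A ⊗ 1_H, where the multiplication on A ⊗ H is (φ ⋈ h)(φ' ⋈ h') = φ(h₁·φ'·S⁻¹(h₃)) ⋈ h₂h'. -/
open TensorProduct Coalgebra LinearMap HopfAlgebra

/-!
Put `β (a ⊗ c) = l a ∘ r (S⁻¹ c)`, an algebra map `H ⊗ H → End A`, and `δ h = (h₁ ⊗ h₃) ⊗ h₂`,
so that `(φ ⋈ h)(x ⋈ g) = φ β(h₁ ⊗ h₃)(x) ⋈ h₂ g`. Left multiplication by `φ ⋈ h` is then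
`(φ ·) ∘ T h` with `T h = mul (1 ⋈ h)`, and associativity comes down to `T (h g) = T h ∘ T g`,
which holds because `δ` and `β` are multiplicative, and to the commutation rule
`T h ∘ (ψ ·) = mul (T h (ψ ⋈ 1))`. Since `S⁻¹` reverses the comultiplication (as `S` does, by
uniqueness of convolution inverses), `β` measures `A` for the comultiplication of `H ⊗ Hᶜᵒᵖ`,
and the commutation rule becomes the coassociativity of `δ` with respect to it: an identity
between two bracketings of the fivefold coproduct of `h`.
-/

section SumRepresentation

variable {R M N P : Type*} [CommSemiring R] [AddCommMonoid M] [Module R M] [AddCommMonoid N]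
  [Module R N] [AddCommMonoid P] [Module R P]

theorem AddSubmonoid.exists_sum_range_of_mem_closure {S : Set M} {x : M}
    (hx : x ∈ AddSubmonoid.closure S) (h0 : (0 : M) ∈ S) :
    ∃ (n : ℕ) (v : ℕ → M), (∀ i, v i ∈ S) ∧ x = ∑ i ∈ Finset.range n, v i := by
  induction hx using AddSubmonoid.closure_induction with
  | mem x hx => exact ⟨1, fun _ => x, fun _ => hx, by simp⟩
  | zero => exact ⟨0, fun _ => 0, fun _ => h0, by simp⟩
  | add x y _ _ hx hy =>
    obtain ⟨n, v, hv, rfl⟩ := hx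
    obtain ⟨m, w, hw, rfl⟩ := hy
    refine ⟨n + m, fun i => if i < n then v i else w (i - n), fun i => ?_, ?_⟩
    · by_cases hi : i < n <;> simp [hi, hv, hw]
    · rw [Finset.sum_range_add]
      congr 1 <;> refine Finset.sum_congr rfl fun i hi => ?_ <;> simp_all

theorem TensorProduct.exists_sum_range_tmul (x : M ⊗[R] N) :
    ∃ (n : ℕ) (f : ℕ → M) (g : ℕ → N), x = ∑ i ∈ Finset.range n, f i ⊗ₜ[R] g i := by
  have hx : x ∈ AddSubmonoid.closure {t | ∃ a b, t = a ⊗ₜ[R] b} := by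
    induction x with
    | zero => exact zero_mem _
    | tmul a b => exact AddSubmonoid.subset_closure ⟨a, b, rfl⟩
    | add x y hx hy => exact add_mem hx hy
  obtain ⟨n, v, hv, rfl⟩ := AddSubmonoid.exists_sum_range_of_mem_closure hx ⟨0, 0, by simp⟩
  choose f g hfg using hv
  exact ⟨n, f, g, by simp_rw [hfg]⟩

theorem TensorProduct.exists_sum_range_tmul_tmul (x : M ⊗[R] (N ⊗[R] P)) :
    ∃ (n : ℕ) (f : ℕ → M) (g : ℕ → N) (e : ℕ → P),
      x = ∑ i ∈ Finset.range n, f i ⊗ₜ[R] (g i ⊗ₜ[R] e i) := by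
  have hx : x ∈ AddSubmonoid.closure {t | ∃ a b c, t = a ⊗ₜ[R] (b ⊗ₜ[R] c)} := by
    induction x with
    | zero => exact zero_mem _
    | tmul a y =>
      induction y with
      | zero => rw [tmul_zero]; exact zero_mem _
      | tmul b c => exact AddSubmonoid.subset_closure ⟨a, b, c, rfl⟩
      | add y z hy hz => rw [tmul_add]; exact add_mem hy hz
    | add x y hx hy => exact add_mem hx hy
  obtain ⟨n, v, hv, rfl⟩ := AddSubmonoid.exists_sum_range_of_mem_closure hx ⟨0, 0, 0, by simp⟩
  choose f g e hfge using hv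
  exact ⟨n, f, g, e, by simp_rw [hfge]⟩

end SumRepresentation

section Measuring

variable {R A C : Type*} [CommSemiring R] [Semiring A] [Algebra R A] [AddCommMonoid C] [Module R C]

def IsMeasuring (ℓ : C →ₗ[R] Module.End R A) (D : C →ₗ[R] C ⊗[R] C) : Prop :=
  ∀ x y : A, ℓ.flip (x * y) = mul' R A ∘ₗ TensorProduct.map (ℓ.flip x) (ℓ.flip y) ∘ₗ D

theorem IsMeasuring.apply_mul {ℓ : C →ₗ[R] Module.End R A} {D : C →ₗ[R] C ⊗[R] C}
    (hℓ : IsMeasuring ℓ D) (c : C) (x y : A) :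
    ℓ c (x * y) = mul' R A (TensorProduct.map (ℓ.flip x) (ℓ.flip y) (D c)) :=
  congr($(hℓ x y) c)

theorem isMeasuring_of_forall_sum [CoalgebraStruct R C] {ℓ : C →ₗ[R] Module.End R A}
    (hℓ : ∀ (c : C) (x y : A) (s : Finset ℕ) (f g : ℕ → C),
      comul c = ∑ i ∈ s, f i ⊗ₜ[R] g i → ℓ c (x * y) = ∑ i ∈ s, ℓ (f i) x * ℓ (g i) y) :
    IsMeasuring ℓ comul := by
  intro x y
  ext c
  obtain ⟨n, f, g, hfg⟩ := TensorProduct.exists_sum_range_tmul (R := R) (comul c)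
  simp [hℓ c x y _ f g hfg, hfg]

theorem IsMeasuring.comp {ℓ : C →ₗ[R] Module.End R A} {D : C →ₗ[R] C ⊗[R] C}
    (hℓ : IsMeasuring ℓ D) {C' : Type*} [AddCommMonoid C'] [Module R C'] {f : C' →ₗ[R] C}
    {D' : C' →ₗ[R] C' ⊗[R] C'} (hf : D ∘ₗ f = TensorProduct.map f f ∘ₗ D') :
    IsMeasuring (ℓ ∘ₗ f) D' := by
  intro x y
  ext c
  have hflip (z : A) : (ℓ ∘ₗ f).flip z = ℓ.flip z ∘ₗ f := rfl
  simp [hℓ.apply_mul, hflip, ← TensorProduct.map_map, ← LinearMap.comp_apply D f, hf]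

theorem IsMeasuring.tensor {C₁ C₂ : Type*} [AddCommMonoid C₁] [Module R C₁] [AddCommMonoid C₂]
    [Module R C₂] {ℓ₁ : C₁ →ₗ[R] Module.End R A} {ℓ₂ : C₂ →ₗ[R] Module.End R A}
    {D₁ : C₁ →ₗ[R] C₁ ⊗[R] C₁} {D₂ : C₂ →ₗ[R] C₂ ⊗[R] C₂}
    (h₁ : IsMeasuring ℓ₁ D₁) (h₂ : IsMeasuring ℓ₂ D₂) {β : C₁ ⊗[R] C₂ →ₗ[R] Module.End R A}
    (hβ : ∀ a c, β (a ⊗ₜ c) = ℓ₁ a * ℓ₂ c) :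
    IsMeasuring β
      ((tensorTensorTensorComm R C₁ C₁ C₂ C₂).toLinearMap ∘ₗ TensorProduct.map D₁ D₂) := by
  intro x y
  refine TensorProduct.ext' fun a c => ?_
  rw [flip_apply, hβ, Module.End.mul_apply, h₂.apply_mul]
  simp only [comp_apply, map_tmul, LinearEquiv.coe_coe]
  induction D₂ c with
  | zero => simp
  | add v w hv hw => simp only [map_add, tmul_add, hv, hw]
  | tmul c₁ c₂ =>
    rw [map_tmul, mul'_apply, flip_apply, flip_apply, h₁.apply_mul]
    induction D₁ a with
    | zero => simp
    | add u v hu hv => simp only [map_add, add_tmul, hu, hv]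
    | tmul a₁ a₂ => simp [hβ]

end Measuring

namespace HopfAlgebra

variable {R H : Type*} [CommSemiring R] [Semiring H] [HopfAlgebra R H]

theorem comul_left_inv :
    WithConv.toConv (TensorProduct.map (antipode R) (antipode R) ∘ₗ
      (TensorProduct.comm R H H).toLinearMap ∘ₗ comul) * WithConv.toConv comul = 1 := by
  have htree : TensorProduct.map comul comul ∘ₗ comul (R := R) (A := H) =
      (TensorProduct.assoc R H H (H ⊗[R] H)).symm.toLinearMap ∘ₗ
        (TensorProduct.assoc R H H H).toLinearMap.lTensor H ∘ₗ
        (comul.rTensor H).lTensor H ∘ₗ comul.lTensor H ∘ₗ comul := by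
    simp only [coassoc_simps]
  have hperm : mul' R (H ⊗[R] H) ∘ₗ (TensorProduct.map (antipode R) (antipode R) ∘ₗ
      (TensorProduct.comm R H H).toLinearMap).rTensor _ ∘ₗ
      (TensorProduct.assoc R H H (H ⊗[R] H)).symm.toLinearMap ∘ₗ
        (TensorProduct.assoc R H H H).toLinearMap.lTensor H =
      (mul' R H ∘ₗ rTensor H (antipode R)).lTensor H ∘ₗ
        (TensorProduct.leftComm R H H H).toLinearMap ∘ₗ
        ((mul' R H ∘ₗ rTensor H (antipode R)).rTensor H).lTensor H := by
    ext a b c d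
    simp
  have hunit : (mul' R H ∘ₗ rTensor H (antipode R)).lTensor H ∘ₗ
      (TensorProduct.leftComm R H H H).toLinearMap ∘ₗ
      ((Algebra.linearMap R H ∘ₗ counit).rTensor H ∘ₗ comul).lTensor H =
      TensorProduct.mk R H H 1 ∘ₗ mul' R H ∘ₗ rTensor H (antipode R) := by
    ext a d
    simp [LinearMap.rTensor_comp_apply]
  -- The left side is `h ↦ ∑ S h₂ h₃ ⊗ S h₁ h₄`; the antipode axiom applies to the middle legs.
  apply WithConv.ofConv_injective
  rw [LinearMap.convMul_def, LinearMap.convOne_def]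
  calc _ = ((mul' R H ∘ₗ rTensor H (antipode R)).lTensor H ∘ₗ
        (TensorProduct.leftComm R H H H).toLinearMap ∘ₗ
        ((mul' R H ∘ₗ rTensor H (antipode R)).rTensor H).lTensor H) ∘ₗ
        (comul.rTensor H).lTensor H ∘ₗ comul.lTensor H ∘ₗ comul := by
        rw [← hperm]
        simp only [LinearMap.comp_assoc]
        rw [← htree, ← LinearMap.comp_assoc _ (TensorProduct.map comul comul), LinearMap.rTensor,
          ← TensorProduct.map_comp, LinearMap.id_comp]
        rfl
    _ = ((mul' R H ∘ₗ rTensor H (antipode R)).lTensor H ∘ₗ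
        (TensorProduct.leftComm R H H H).toLinearMap ∘ₗ
        ((mul' R H ∘ₗ rTensor H (antipode R) ∘ₗ comul).rTensor H ∘ₗ comul).lTensor H) ∘ₗ comul := by
        simp only [LinearMap.lTensor_comp, LinearMap.rTensor_comp, LinearMap.comp_assoc]
    _ = TensorProduct.mk R H H 1 ∘ₗ Algebra.linearMap R H ∘ₗ counit := by
        rw [mul_antipode_rTensor_comul, hunit]
        simp only [LinearMap.comp_assoc, mul_antipode_rTensor_comul]
    _ = Algebra.linearMap R (H ⊗[R] H) ∘ₗ counit := by
        ext
        simp [Algebra.algebraMap_eq_smul_one, TensorProduct.smul_tmul',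
          Algebra.TensorProduct.one_def]

theorem comul_comp_antipode :
    comul ∘ₗ antipode R = TensorProduct.map (antipode R) (antipode R) ∘ₗ
      (TensorProduct.comm R H H).toLinearMap ∘ₗ comul :=
  WithConv.toConv_injective (left_inv_eq_right_inv comul_left_inv comul_right_inv).symm

variable {Sinv : H →ₗ[R] H}

theorem comul_comp_of_inverse (h₁ : Function.LeftInverse Sinv (antipode R))
    (h₂ : Function.RightInverse Sinv (antipode R)) :
    comul ∘ₗ Sinv =
      TensorProduct.map Sinv Sinv ∘ₗ (TensorProduct.comm R H H).toLinearMap ∘ₗ comul := by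
  have hinv (w : H ⊗[R] H) : TensorProduct.map Sinv Sinv (TensorProduct.comm R H H
      (TensorProduct.map (antipode R) (antipode R) (TensorProduct.comm R H H w))) = w := by
    induction w with
    | zero => simp
    | tmul a b => simp [h₁ a, h₁ b]
    | add v w hv hw => simp only [map_add, hv, hw]
  ext h
  have key := congr($(comul_comp_antipode (R := R) (H := H)) (Sinv h))
  simp only [LinearMap.comp_apply, h₂ h] at key
  simp only [LinearMap.comp_apply, key, LinearEquiv.coe_coe, hinv]

theorem mul_antidistrib_of_inverse (h₁ : Function.LeftInverse Sinv (antipode R))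
    (h₂ : Function.RightInverse Sinv (antipode R)) (a b : H) :
    Sinv (a * b) = Sinv b * Sinv a := by
  rw [← h₁ (Sinv b * Sinv a), antipode_mul_antidistrib, h₂, h₂]

theorem map_one_of_inverse (h₁ : Function.LeftInverse Sinv (antipode R)) : Sinv (1 : H) = 1 := by
  simpa using h₁ 1

theorem counit_of_inverse (h₂ : Function.RightInverse Sinv (antipode R)) (h : H) :
    counit (R := R) (Sinv h) = counit h := by
  rw [← counit_antipode, h₂]

end HopfAlgebra

section OuterComul

variable {R H : Type*} [CommSemiring R] [Semiring H] [Bialgebra R H]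

/-- `h ↦ (h₁ ⊗ h₃) ⊗ h₂`. -/
noncomputable def outerComul (R H : Type*) [CommSemiring R] [Semiring H] [Bialgebra R H] :
    H →ₐ[R] (H ⊗[R] H) ⊗[R] H :=
  (Algebra.TensorProduct.assoc R R R H H H).symm.toAlgHom.comp <|
    (Algebra.TensorProduct.map (AlgHom.id R H)
      ((Algebra.TensorProduct.comm R H H).toAlgHom.comp (Bialgebra.comulAlgHom R H))).comp
      (Bialgebra.comulAlgHom R H)

theorem toLinearMap_outerComul : (outerComul R H).toLinearMap =
    (TensorProduct.assoc R H H H).symm.toLinearMap ∘ₗ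
      ((TensorProduct.comm R H H).toLinearMap ∘ₗ comul).lTensor H ∘ₗ comul :=
  rfl

/-- The comultiplication `a ⊗ c ↦ (a₁ ⊗ c₂) ⊗ (a₂ ⊗ c₁)` of `H ⊗ Hᶜᵒᵖ`. -/
noncomputable def comulTensorCop (R H : Type*) [CommSemiring R] [Semiring H] [Bialgebra R H] :
    H ⊗[R] H →ₗ[R] (H ⊗[R] H) ⊗[R] (H ⊗[R] H) :=
  (tensorTensorTensorComm R H H H H).toLinearMap ∘ₗ
    TensorProduct.map comul ((TensorProduct.comm R H H).toLinearMap ∘ₗ comul)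

theorem rTensor_comulTensorCop_comp_outerComul :
    (comulTensorCop R H).rTensor H ∘ₗ (outerComul R H).toLinearMap =
      (TensorProduct.assoc R _ _ _).symm.toLinearMap ∘ₗ (outerComul R H).toLinearMap.lTensor _ ∘ₗ
        (outerComul R H).toLinearMap := by
  let e : H ⊗[R] ((H ⊗[R] (H ⊗[R] H)) ⊗[R] H) →ₗ[R] (H ⊗[R] H) ⊗[R] (H ⊗[R] (H ⊗[R] H)) :=
    (TensorProduct.assoc R H H (H ⊗[R] (H ⊗[R] H))).symm.toLinearMap ∘ₗ
      ((TensorProduct.assoc R H H H).toLinearMap.lTensor H ∘ₗ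
        (TensorProduct.assoc R H (H ⊗[R] H) H).toLinearMap).lTensor H
  have htree : TensorProduct.map comul (comul.lTensor H) ∘ₗ comul.lTensor H ∘ₗ
      comul (R := R) (A := H) =
        e ∘ₗ ((comul.lTensor H ∘ₗ comul).rTensor H).lTensor H ∘ₗ comul.lTensor H ∘ₗ comul := by
    simp only [e, coassoc_simps]
  let P₀ : H ⊗[R] (H ⊗[R] H) →ₗ[R] (H ⊗[R] H) ⊗[R] H :=
    (TensorProduct.assoc R H H H).symm.toLinearMap ∘ₗ
      (TensorProduct.comm R H H).toLinearMap.lTensor H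
  let P₁ : H ⊗[R] ((H ⊗[R] (H ⊗[R] H)) ⊗[R] H) →ₗ[R] (H ⊗[R] H) ⊗[R] (H ⊗[R] (H ⊗[R] H)) :=
    (TensorProduct.assoc R H H _).symm.toLinearMap ∘ₗ
      (TensorProduct.comm R _ H).toLinearMap.lTensor H
  let Q : (H ⊗[R] H) ⊗[R] (H ⊗[R] (H ⊗[R] H)) →ₗ[R] ((H ⊗[R] H) ⊗[R] (H ⊗[R] H)) ⊗[R] H :=
    ((tensorTensorTensorComm R H H H H).toLinearMap ∘ₗ
      (TensorProduct.comm R H H).toLinearMap.lTensor (H ⊗[R] H)).rTensor H ∘ₗ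
      (TensorProduct.assoc R _ _ H).symm.toLinearMap ∘ₗ
      (TensorProduct.comm R H _).toLinearMap.lTensor _
  have hL : (comulTensorCop R H).rTensor H ∘ₗ P₀ =
      Q ∘ₗ TensorProduct.map comul (comul.lTensor H) := by
    ext a b c
    simp [P₀, Q, comulTensorCop]
  have hperm : Q ∘ₗ e = (TensorProduct.assoc R _ _ H).symm.toLinearMap ∘ₗ P₀.lTensor _ ∘ₗ P₁ := by
    ext a b₁ b₂ b₃ c
    simp [P₀, P₁, Q, e]
  have hR : ((TensorProduct.assoc R _ _ H).symm.toLinearMap ∘ₗ P₀.lTensor _ ∘ₗ P₁) ∘ₗ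
      ((comul.lTensor H ∘ₗ comul).rTensor H).lTensor H =
      (TensorProduct.assoc R _ _ _).symm.toLinearMap ∘ₗ
        (outerComul R H).toLinearMap.lTensor _ ∘ₗ P₀ := by
    ext a b c
    simp [P₀, P₁, toLinearMap_outerComul, LinearMap.lTensor_comp]
  -- Both sides rearrange the fivefold coproduct of `h`, bracketed in the two ways of `htree`.
  calc _ = ((comulTensorCop R H).rTensor H ∘ₗ P₀) ∘ₗ comul.lTensor H ∘ₗ comul := by
        simp only [toLinearMap_outerComul, P₀, LinearMap.lTensor_comp, LinearMap.comp_assoc]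
    _ = (Q ∘ₗ e) ∘ₗ ((comul.lTensor H ∘ₗ comul).rTensor H).lTensor H ∘ₗ
          comul.lTensor H ∘ₗ comul := by
        rw [hL, LinearMap.comp_assoc, htree]
        simp only [LinearMap.comp_assoc]
    _ = _ := by
        rw [hperm, ← LinearMap.comp_assoc, hR, toLinearMap_outerComul]
        simp only [P₀, LinearMap.lTensor_comp, LinearMap.comp_assoc]

theorem rTensor_counit_comp_outerComul :
    (counit (R := R) (A := H ⊗[R] H)).rTensor H ∘ₗ (outerComul R H).toLinearMap =
      TensorProduct.mk R R H 1 := by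
  have h : (counit (R := R) (A := H ⊗[R] H)).rTensor H ∘ₗ
      (TensorProduct.assoc R H H H).symm.toLinearMap ∘ₗ
        (TensorProduct.comm R H H).toLinearMap.lTensor H =
      (counit (R := R) (A := H)).rTensor H ∘ₗ
        ((TensorProduct.rid R H).toLinearMap ∘ₗ (counit (R := R) (A := H)).lTensor H).lTensor H :=
      by
    ext a b c
    simp [TensorProduct.smul_tmul']
  calc _ = ((counit (R := R) (A := H ⊗[R] H)).rTensor H ∘ₗ
        (TensorProduct.assoc R H H H).symm.toLinearMap ∘ₗ
        (TensorProduct.comm R H H).toLinearMap.lTensor H) ∘ₗ comul.lTensor H ∘ₗ comul := by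
        simp only [toLinearMap_outerComul, LinearMap.lTensor_comp, LinearMap.comp_assoc]
    _ = (counit (R := R) (A := H)).rTensor H ∘ₗ
        ((TensorProduct.rid R H).toLinearMap ∘ₗ (counit (R := R) (A := H)).lTensor H ∘ₗ
          comul).lTensor H ∘ₗ comul := by
        rw [h]
        simp only [LinearMap.lTensor_comp, LinearMap.comp_assoc]
    _ = _ := by
        have hrid : (TensorProduct.rid R H).toLinearMap ∘ₗ (TensorProduct.mk R H R).flip 1 =
            LinearMap.id := by
          ext
          simp
        rw [lTensor_counit_comp_comul, hrid, LinearMap.lTensor_id, LinearMap.id_comp,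
          rTensor_counit_comp_comul]

end OuterComul

section DiagonalCrossedProduct

variable {R H A : Type*} [CommSemiring R] [Semiring H] [Bialgebra R H] [Semiring A] [Algebra R A]

/-- `mul` is the diagonal crossed product multiplication
`(φ ⋈ h)(x ⋈ g) = φ · β(h₁ ⊗ h₃) x ⋈ h₂ g`. -/
def IsDiagonalMul (β : H ⊗[R] H →ₐ[R] Module.End R A)
    (mul : A ⊗[R] H →ₗ[R] A ⊗[R] H →ₗ[R] A ⊗[R] H) : Prop :=
  ∀ φ h x g, mul (φ ⊗ₜ h) (x ⊗ₜ g) = (mulLeft R φ).rTensor H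
    (TensorProduct.map (β.toLinearMap.flip x) (mulRight R g) (outerComul R H h))

variable {β : H ⊗[R] H →ₐ[R] Module.End R A} {mul : A ⊗[R] H →ₗ[R] A ⊗[R] H →ₗ[R] A ⊗[R] H}

theorem isDiagonalMul_of_forall_sum
    (hmul : ∀ (φ x : A) (h g : H) (s : Finset ℕ) (f g' e : ℕ → H),
      TensorProduct.map LinearMap.id comul (comul h) = ∑ i ∈ s, f i ⊗ₜ[R] (g' i ⊗ₜ[R] e i) →
      mul (φ ⊗ₜ h) (x ⊗ₜ g) = ∑ i ∈ s, (φ * β (f i ⊗ₜ e i) x) ⊗ₜ (g' i * g)) :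
    IsDiagonalMul β mul := by
  intro φ h x g
  obtain ⟨n, f, g', e, he⟩ := TensorProduct.exists_sum_range_tmul_tmul
    (TensorProduct.map LinearMap.id comul (comul (R := R) h))
  have hδ : outerComul R H h = (TensorProduct.assoc R H H H).symm
      ((TensorProduct.comm R H H).toLinearMap.lTensor H
        (TensorProduct.map LinearMap.id comul (comul (R := R) h))) := by
    rw [← AlgHom.toLinearMap_apply, toLinearMap_outerComul, LinearMap.lTensor_comp]
    rfl
  rw [hmul φ x h g _ f g' e he, hδ, he]
  simp

namespace IsDiagonalMul

theorem mul_one_tmul_tmul (hmul : IsDiagonalMul β mul) (h : H) (x : A) (g : H) :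
    mul (1 ⊗ₜ h) (x ⊗ₜ g) =
      TensorProduct.map (β.toLinearMap.flip x) (mulRight R g) (outerComul R H h) := by
  simp [hmul 1]

theorem mul_tmul (hmul : IsDiagonalMul β mul) (φ : A) (h : H) :
    mul (φ ⊗ₜ h) = (mulLeft R φ).rTensor H ∘ₗ mul (1 ⊗ₜ h) :=
  TensorProduct.ext' fun x g => by simp [hmul φ, hmul 1]

theorem mul_one_tmul_one (hmul : IsDiagonalMul β mul) : mul (1 ⊗ₜ 1) = LinearMap.id := by
  have hβ : β (1 ⊗ₜ 1) = 1 := by rw [← Algebra.TensorProduct.one_def, map_one]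
  exact TensorProduct.ext' fun x g => by
    simp [hmul.mul_one_tmul_tmul, Algebra.TensorProduct.one_def, hβ]

theorem mul_one_tmul_mul (hmul : IsDiagonalMul β mul) (h g : H) :
    mul (1 ⊗ₜ (h * g)) = mul (1 ⊗ₜ h) ∘ₗ mul (1 ⊗ₜ g) := by
  refine TensorProduct.ext' fun x k => ?_
  rw [LinearMap.comp_apply, hmul.mul_one_tmul_tmul, hmul.mul_one_tmul_tmul, map_mul]
  induction outerComul R H g with
  | zero => simp
  | add v w hv hw => simp only [mul_add, map_add, hv, hw]
  | tmul u b =>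
    rw [TensorProduct.map_tmul, hmul.mul_one_tmul_tmul]
    induction outerComul R H h with
    | zero => simp
    | add v w hv hw => simp only [add_mul, map_add, hv, hw]
    | tmul u' b' => simp [mul_assoc]

theorem mul_one_tmul_tmul_eq_lTensor (hmul : IsDiagonalMul β mul) (h : H) (x : A) (g : H) :
    mul (1 ⊗ₜ h) (x ⊗ₜ g) = (mulRight R g).lTensor A (mul (1 ⊗ₜ h) (x ⊗ₜ 1)) := by
  simp only [hmul.mul_one_tmul_tmul, ← LinearMap.comp_apply, LinearMap.lTensor,
    ← TensorProduct.map_comp]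
  congr 3
  ext
  simp

theorem mul_one_tmul_one_tmul_one (hmul : IsDiagonalMul β mul)
    (hunit : β.toLinearMap.flip 1 = Algebra.linearMap R A ∘ₗ counit) (h : H) :
    mul (1 ⊗ₜ h) (1 ⊗ₜ 1) = 1 ⊗ₜ h := by
  have hε := LinearMap.congr_fun (rTensor_counit_comp_outerComul (R := R) (H := H)) h
  simp only [LinearMap.comp_apply, AlgHom.toLinearMap_apply] at hε
  rw [hmul.mul_one_tmul_tmul, hunit, mulRight_one, ← LinearMap.rTensor,
    LinearMap.rTensor_comp_apply, hε]
  simp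

theorem mul_one_tmul_comp_rTensor_mulLeft (hmul : IsDiagonalMul β mul)
    (hmeas : IsMeasuring β.toLinearMap (comulTensorCop R H)) (h : H) (x : A) :
    mul (1 ⊗ₜ h) ∘ₗ (mulLeft R x).rTensor H = mul (mul (1 ⊗ₜ h) (x ⊗ₜ 1)) := by
  refine TensorProduct.ext' fun y g => ?_
  let F := TensorProduct.map (TensorProduct.map (β.toLinearMap.flip x) (β.toLinearMap.flip y))
    (mulRight R g)
  have hL : TensorProduct.map (β.toLinearMap.flip (x * y)) (mulRight R g) =
      (mul' R A).rTensor H ∘ₗ F ∘ₗ (comulTensorCop R H).rTensor H := by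
    rw [hmeas x y]
    ext
    simp [F]
  have hR (w : (H ⊗[R] H) ⊗[R] H) :
      mul (TensorProduct.map (β.toLinearMap.flip x) (mulRight R 1) w) (y ⊗ₜ g) =
        (mul' R A).rTensor H (F ((TensorProduct.assoc R _ _ _).symm
          ((outerComul R H).toLinearMap.lTensor _ w))) := by
    induction w with
    | zero => simp
    | add v w hv hw => simp only [map_add, LinearMap.add_apply, hv, hw]
    | tmul u b =>
      simp only [TensorProduct.map_tmul, LinearMap.lTensor_tmul, AlgHom.toLinearMap_apply,
        mulRight_apply, mul_one, hmul _ b]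
      induction outerComul R H b with
      | zero => simp
      | add v w hv hw => simp only [map_add, tmul_add, hv, hw]
      | tmul p b' => simp [F]
  have hδ := LinearMap.congr_fun (rTensor_comulTensorCop_comp_outerComul (R := R) (H := H)) h
  simp only [LinearMap.comp_apply, AlgHom.toLinearMap_apply, LinearEquiv.coe_coe] at hδ
  rw [LinearMap.comp_apply, LinearMap.rTensor_tmul, mulLeft_apply, hmul.mul_one_tmul_tmul,
    hmul.mul_one_tmul_tmul, hR, hL, LinearMap.comp_apply, LinearMap.comp_apply, hδ]

theorem mul_rTensor_mulLeft (hmul : IsDiagonalMul β mul) (φ : A) (w : A ⊗[R] H) :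
    mul ((mulLeft R φ).rTensor H w) = (mulLeft R φ).rTensor H ∘ₗ mul w := by
  induction w with
  | zero => simp
  | add v w hv hw => simp only [map_add, hv, hw, LinearMap.comp_add]
  | tmul ψ g =>
    rw [LinearMap.rTensor_tmul, mulLeft_apply, hmul.mul_tmul, hmul.mul_tmul ψ,
      ← LinearMap.comp_assoc, ← LinearMap.rTensor_comp, LinearMap.mulLeft_mul]

theorem mul_lTensor_mulRight (hmul : IsDiagonalMul β mul) (g : H) (w : A ⊗[R] H) :
    mul ((mulRight R g).lTensor A w) = mul w ∘ₗ mul (1 ⊗ₜ g) := by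
  induction w with
  | zero => simp
  | add v w hv hw => simp only [map_add, hv, hw, LinearMap.add_comp]
  | tmul ψ b =>
    rw [LinearMap.lTensor_tmul, mulRight_apply, hmul.mul_tmul, hmul.mul_one_tmul_mul,
      hmul.mul_tmul ψ, LinearMap.comp_assoc]

theorem mul_mul_one_tmul (hmul : IsDiagonalMul β mul)
    (hmeas : IsMeasuring β.toLinearMap (comulTensorCop R H)) (h : H) (y : A ⊗[R] H) :
    mul (mul (1 ⊗ₜ h) y) = mul (1 ⊗ₜ h) ∘ₗ mul y := by
  induction y with
  | zero => simp
  | add v w hv hw => simp only [map_add, hv, hw, LinearMap.comp_add]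
  | tmul ψ g =>
    rw [hmul.mul_one_tmul_tmul_eq_lTensor, hmul.mul_lTensor_mulRight,
      ← hmul.mul_one_tmul_comp_rTensor_mulLeft hmeas, hmul.mul_tmul ψ, LinearMap.comp_assoc]

theorem mul_mul (hmul : IsDiagonalMul β mul)
    (hmeas : IsMeasuring β.toLinearMap (comulTensorCop R H)) (x y : A ⊗[R] H) :
    mul (mul x y) = mul x ∘ₗ mul y := by
  induction x with
  | zero => simp
  | add v w hv hw => simp only [map_add, LinearMap.add_apply, hv, hw, LinearMap.add_comp]
  | tmul φ h =>
    rw [hmul.mul_tmul, LinearMap.comp_apply, hmul.mul_rTensor_mulLeft, hmul.mul_mul_one_tmul hmeas,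
      LinearMap.comp_assoc]

theorem assoc_and_unit (hmul : IsDiagonalMul β mul)
    (hmeas : IsMeasuring β.toLinearMap (comulTensorCop R H))
    (hunit : β.toLinearMap.flip 1 = Algebra.linearMap R A ∘ₗ counit) :
    (∀ x y z : A ⊗[R] H, mul (mul x y) z = mul x (mul y z)) ∧
    (∀ x : A ⊗[R] H, mul (1 ⊗ₜ 1) x = x) ∧
    (∀ x : A ⊗[R] H, mul x (1 ⊗ₜ 1) = x) := by
  refine ⟨fun x y z => congr($(hmul.mul_mul hmeas x y) z),
    fun x => by rw [hmul.mul_one_tmul_one, LinearMap.id_apply], fun x => ?_⟩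
  induction x with
  | zero => simp
  | add v w hv hw => simp only [map_add, LinearMap.add_apply, hv, hw]
  | tmul φ h =>
    rw [hmul.mul_tmul, LinearMap.comp_apply, hmul.mul_one_tmul_one_tmul_one hunit,
      LinearMap.rTensor_tmul, mulLeft_apply, mul_one]

end IsDiagonalMul

end DiagonalCrossedProduct

/-- the diagonal crossed product `A ⋈ H` of an `H`-bimodule algebra `A`
(for `H` with bijective antipode, with inverse `Sinv`) is an associative algebra with
unit `1 ⊗ 1`. -/
theorem stmt_1 (k H A : Type) [Field k] [Ring H] [HopfAlgebra k H]
    [Ring A] [Algebra k A]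
    (l : H →ₗ[k] A →ₗ[k] A)
    (hl_one : ∀ a : A, l 1 a = a)
    (hl_mul : ∀ (h h' : H) (a : A), l (h * h') a = l h (l h' a))
    (hl_unit : ∀ h : H, l h (1 : A) = Coalgebra.counit (R := k) h • (1 : A))
    (hl_meas : ∀ (h : H) (a b : A) (s : Finset ℕ) (f g : ℕ → H),
      Coalgebra.comul (R := k) h = ∑ i ∈ s, f i ⊗ₜ[k] g i →
      l h (a * b) = ∑ i ∈ s, l (f i) a * l (g i) b)
    (r : H →ₗ[k] A →ₗ[k] A)
    (hr_one : ∀ a : A, r 1 a = a)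
    (hr_mul : ∀ (h h' : H) (a : A), r (h * h') a = r h' (r h a))
    (hr_unit : ∀ h : H, r h (1 : A) = Coalgebra.counit (R := k) h • (1 : A))
    (hr_meas : ∀ (h : H) (a b : A) (s : Finset ℕ) (f g : ℕ → H),
      Coalgebra.comul (R := k) h = ∑ i ∈ s, f i ⊗ₜ[k] g i →
      r h (a * b) = ∑ i ∈ s, r (f i) a * r (g i) b)
    (hcomm : ∀ (h h' : H) (a : A), l h (r h' a) = r h' (l h a))
    (Sinv : H →ₗ[k] H)
    (hSinv1 : ∀ h : H, Sinv (HopfAlgebra.antipode (R := k) h) = h)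
    (hSinv2 : ∀ h : H, HopfAlgebra.antipode (R := k) (Sinv h) = h)
    (mul : (A ⊗[k] H) →ₗ[k] (A ⊗[k] H) →ₗ[k] (A ⊗[k] H))
    (hmul : ∀ (φ φ' : A) (h h' : H) (s : Finset ℕ) (f g e : ℕ → H),
      (TensorProduct.map (LinearMap.id : H →ₗ[k] H) (Coalgebra.comul (R := k))) (Coalgebra.comul (R := k) h) =
        ∑ i ∈ s, f i ⊗ₜ[k] (g i ⊗ₜ[k] e i) →
      mul (φ ⊗ₜ[k] h) (φ' ⊗ₜ[k] h') =
        ∑ i ∈ s, (φ * r (Sinv (e i)) (l (f i) φ')) ⊗ₜ[k] (g i * h'))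
    :
    (∀ x y z : A ⊗[k] H, mul (mul x y) z = mul x (mul y z)) ∧
    (∀ x : A ⊗[k] H, mul ((1 : A) ⊗ₜ[k] (1 : H)) x = x) ∧
    (∀ x : A ⊗[k] H, mul x ((1 : A) ⊗ₜ[k] (1 : H)) = x) := by
  let lA : H →ₐ[k] Module.End k A :=
    .ofLinearMap l (LinearMap.ext hl_one) fun h h' => LinearMap.ext (hl_mul h h')
  let rA : H →ₐ[k] Module.End k A := .ofLinearMap (r ∘ₗ Sinv)
    (LinearMap.ext fun a => by simp [map_one_of_inverse hSinv1, hr_one])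
    fun h h' => LinearMap.ext fun a => by simp [mul_antidistrib_of_inverse hSinv1 hSinv2, hr_mul]
  let β := Algebra.TensorProduct.lift lA rA fun h h' => LinearMap.ext (hcomm h (Sinv h'))
  have hβ (a c : H) : β (a ⊗ₜ c) = l a * r (Sinv c) := Algebra.TensorProduct.lift_tmul ..
  have hmeas : IsMeasuring β.toLinearMap (comulTensorCop k H) :=
    (isMeasuring_of_forall_sum hl_meas).tensor
      ((isMeasuring_of_forall_sum hr_meas).comp (comul_comp_of_inverse hSinv1 hSinv2)) hβ
  have hunit : β.toLinearMap.flip 1 = Algebra.linearMap k A ∘ₗ counit :=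
    TensorProduct.ext' fun a c => by
      simp [hβ, hl_unit, hr_unit, counit_of_inverse hSinv2, Algebra.algebraMap_eq_smul_one,
        smul_smul]
  refine IsDiagonalMul.assoc_and_unit
    (isDiagonalMul_of_forall_sum fun φ x h g s f g' e he => ?_) hmeas hunit
  rw [hmul φ x h g s f g' e he]
  simp [hβ, hcomm]
end

section
/- Kadison's algebra A^e ◇ H, defined on A ⊗ A^op ⊗ H by (a⊗b⊗h)(a'⊗b'⊗h') = a(h₁·a') ⊗ b'(S(h'₂)·b) ⊗ h₂h'₁ (where the product in the second tensor factor is taken in A), coincides with the L-R-smash product A^e ♮ H of the H-bimodule algebra A^e = A ⊗ A^op. -/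
open scoped TensorProduct
open Finset

/-- The right action of `h` on `Aᵐᵒᵖ` given by `b · h := S(h) · b`, as a linear map. -/
noncomputable def rmap (k : Type) {H A : Type} [Field k] [Ring H] [HopfAlgebra k H]
    [Ring A] [Algebra k A] (l : H →ₗ[k] A →ₗ[k] A) (h : H) : Aᵐᵒᵖ →ₗ[k] Aᵐᵒᵖ :=
  (MulOpposite.opLinearEquiv k).toLinearMap ∘ₗ l (HopfAlgebra.antipode (R := k) h) ∘ₗ
    (MulOpposite.opLinearEquiv k).symm.toLinearMap

/-- Kadison's multiplication on `A^e ⊗ H = (A ⊗ Aᵐᵒᵖ) ⊗ H` coincides with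
the L-R-smash product multiplication of the `H`-bimodule algebra `A^e = A ⊗ Aᵐᵒᵖ`
(left action `TensorProduct.map (l h) id`, right action `TensorProduct.map id (rmap k l h)`). -/
theorem stmt_4 (k H A : Type) [Field k] [Ring H] [HopfAlgebra k H]
    [Ring A] [Algebra k A]
    (hbij : Function.Bijective (HopfAlgebra.antipode (R := k) (A := H)))
    (l : H →ₗ[k] A →ₗ[k] A)
    (hl_one : ∀ a : A, l 1 a = a)
    (hl_mul : ∀ (h h' : H) (a : A), l (h * h') a = l h (l h' a))
    (hl_unit : ∀ h : H, l h (1 : A) = Coalgebra.counit (R := k) h • (1 : A))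
    (hl_meas : ∀ (h : H) (a b : A) (s : Finset ℕ) (f g : ℕ → H),
      Coalgebra.comul (R := k) h = ∑ i ∈ s, f i ⊗ₜ[k] g i →
      l h (a * b) = ∑ i ∈ s, l (f i) a * l (g i) b)
    (mulK : ((A ⊗[k] Aᵐᵒᵖ) ⊗[k] H) →ₗ[k] ((A ⊗[k] Aᵐᵒᵖ) ⊗[k] H) →ₗ[k] ((A ⊗[k] Aᵐᵒᵖ) ⊗[k] H))
    (hK : ∀ (a b a' b' : A) (h h' : H) (s t : Finset ℕ) (f g f' g' : ℕ → H),
      Coalgebra.comul (R := k) h = ∑ i ∈ s, f i ⊗ₜ[k] g i →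
      Coalgebra.comul (R := k) h' = ∑ j ∈ t, f' j ⊗ₜ[k] g' j →
      mulK ((a ⊗ₜ[k] MulOpposite.op b) ⊗ₜ[k] h) ((a' ⊗ₜ[k] MulOpposite.op b') ⊗ₜ[k] h') =
        ∑ i ∈ s, ∑ j ∈ t,
          ((a * l (f i) a') ⊗ₜ[k] MulOpposite.op (b' * l (HopfAlgebra.antipode (R := k) (g' j)) b)) ⊗ₜ[k]
            (g i * f' j))
    :
    ∀ (a b a' b' : A) (h h' : H) (s t : Finset ℕ) (f g f' g' : ℕ → H),
      Coalgebra.comul (R := k) h = ∑ i ∈ s, f i ⊗ₜ[k] g i →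
      Coalgebra.comul (R := k) h' = ∑ j ∈ t, f' j ⊗ₜ[k] g' j →
      mulK ((a ⊗ₜ[k] MulOpposite.op b) ⊗ₜ[k] h) ((a' ⊗ₜ[k] MulOpposite.op b') ⊗ₜ[k] h') =
        ∑ i ∈ s, ∑ j ∈ t,
          (TensorProduct.map LinearMap.id (rmap k l (g' j)) (a ⊗ₜ[k] MulOpposite.op b) *
            TensorProduct.map (l (f i)) LinearMap.id (a' ⊗ₜ[k] MulOpposite.op b')) ⊗ₜ[k]
            (g i * f' j) := by
  intro a b a' b' h h' s t f g f' g' hs ht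
  rw [hK a b a' b' h h' s t f g f' g' hs ht]
  refine Finset.sum_congr rfl fun i _ => Finset.sum_congr rfl fun j _ => ?_
  simp [rmap, Algebra.TensorProduct.tmul_mul_tmul, MulOpposite.op_mul]
end

section
/- The linear map A ⊙ H ⊙ A → (A ⊗ A^op) ⋈ H sending a⊗h⊗b to (a⊗b) ⋈ h is an algebra isomorphism between the Connes-Moscovici algebra and the diagonal crossed product of the H-bimodule algebra A^e = A ⊗ A^op with H. -/
open scoped TensorProduct
open Finset

lemma aux_sum_split {M : Type*} [AddCommMonoid M] (n m : ℕ) (F G : ℕ → M) :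
    ∑ i ∈ range (n + m), (if i < n then F i else G (i - n)) =
      ∑ i ∈ range n, F i + ∑ i ∈ range m, G i := by
  induction m with
  | zero =>
      simp only [add_zero, range_zero, sum_empty]
      exact Finset.sum_congr rfl fun i hi => if_pos (mem_range.mp hi)
  | succ m ih =>
      rw [← add_assoc, sum_range_succ, ih, sum_range_succ, if_neg (by omega)]
      simp only [Nat.add_sub_cancel_left, add_assoc]

lemma aux_pair {k M N : Type*} [Field k] [AddCommGroup M] [Module k M]
    [AddCommGroup N] [Module k N] (t : M ⊗[k] N) :
    ∃ (n : ℕ) (f : ℕ → M) (g : ℕ → N), t = ∑ i ∈ range n, f i ⊗ₜ[k] g i := by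
  induction t with
  | zero => exact ⟨0, fun _ => 0, fun _ => 0, by simp⟩
  | tmul x y => exact ⟨1, fun _ => x, fun _ => y, by simp⟩
  | add t₁ t₂ h₁ h₂ =>
      obtain ⟨n₁, f₁, g₁, h₁⟩ := h₁
      obtain ⟨n₂, f₂, g₂, h₂⟩ := h₂
      refine ⟨n₁ + n₂, fun i => if i < n₁ then f₁ i else f₂ (i - n₁),
        fun i => if i < n₁ then g₁ i else g₂ (i - n₁), ?_⟩
      rw [h₁, h₂, ← aux_sum_split n₁ n₂ (fun i => f₁ i ⊗ₜ[k] g₁ i) (fun i => f₂ i ⊗ₜ[k] g₂ i)]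
      exact Finset.sum_congr rfl fun i _ => by by_cases hi : i < n₁ <;> simp [hi]

lemma aux_triple {k M N P : Type*} [Field k] [AddCommGroup M] [Module k M]
    [AddCommGroup N] [Module k N] [AddCommGroup P] [Module k P] (t : M ⊗[k] (N ⊗[k] P)) :
    ∃ (n : ℕ) (f : ℕ → M) (g : ℕ → N) (e : ℕ → P),
      t = ∑ i ∈ range n, f i ⊗ₜ[k] (g i ⊗ₜ[k] e i) := by
  induction t with
  | zero => exact ⟨0, fun _ => 0, fun _ => 0, fun _ => 0, by simp⟩
  | tmul x y =>
      obtain ⟨n, g, e, hy⟩ := aux_pair y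
      exact ⟨n, fun _ => x, g, e, by rw [hy, TensorProduct.tmul_sum]⟩
  | add t₁ t₂ h₁ h₂ =>
      obtain ⟨n₁, f₁, g₁, e₁, h₁⟩ := h₁
      obtain ⟨n₂, f₂, g₂, e₂, h₂⟩ := h₂
      refine ⟨n₁ + n₂, fun i => if i < n₁ then f₁ i else f₂ (i - n₁),
        fun i => if i < n₁ then g₁ i else g₂ (i - n₁),
        fun i => if i < n₁ then e₁ i else e₂ (i - n₁), ?_⟩
      rw [h₁, h₂, ← aux_sum_split n₁ n₂ (fun i => f₁ i ⊗ₜ[k] (g₁ i ⊗ₜ[k] e₁ i))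
        (fun i => f₂ i ⊗ₜ[k] (g₂ i ⊗ₜ[k] e₂ i))]
      exact Finset.sum_congr rfl fun i _ => by by_cases hi : i < n₁ <;> simp [hi]

/-- `a ⊗ h ⊗ b ↦ (a ⊗ b) ⋈ h` is an algebra isomorphism from the
Connes-Moscovici algebra `A ⊙ H ⊙ A` to the diagonal crossed product `(A ⊗ Aᵐᵒᵖ) ⋈ H`. -/
theorem stmt_7 (k H A : Type) [Field k] [Ring H] [HopfAlgebra k H]
    [Ring A] [Algebra k A]
    (l : H →ₗ[k] A →ₗ[k] A)
    (hl_one : ∀ a : A, l 1 a = a)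
    (hl_mul : ∀ (h h' : H) (a : A), l (h * h') a = l h (l h' a))
    (hl_unit : ∀ h : H, l h (1 : A) = Coalgebra.counit (R := k) h • (1 : A))
    (hl_meas : ∀ (h : H) (a b : A) (s : Finset ℕ) (f g : ℕ → H),
      Coalgebra.comul (R := k) h = ∑ i ∈ s, f i ⊗ₜ[k] g i →
      l h (a * b) = ∑ i ∈ s, l (f i) a * l (g i) b)
    (Sinv : H →ₗ[k] H)
    (hSinv1 : ∀ h : H, Sinv (HopfAlgebra.antipode (R := k) h) = h)
    (hSinv2 : ∀ h : H, HopfAlgebra.antipode (R := k) (Sinv h) = h)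
    (mulCM : (A ⊗[k] (H ⊗[k] A)) →ₗ[k] (A ⊗[k] (H ⊗[k] A)) →ₗ[k] (A ⊗[k] (H ⊗[k] A)))
    (hCM : ∀ (a b a' b' : A) (h h' : H) (s : Finset ℕ) (f g e : ℕ → H),
      (TensorProduct.map (LinearMap.id : H →ₗ[k] H) (Coalgebra.comul (R := k))) (Coalgebra.comul (R := k) h) =
        ∑ i ∈ s, f i ⊗ₜ[k] (g i ⊗ₜ[k] e i) →
      mulCM (a ⊗ₜ[k] (h ⊗ₜ[k] b)) (a' ⊗ₜ[k] (h' ⊗ₜ[k] b')) =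
        ∑ i ∈ s, (a * l (f i) a') ⊗ₜ[k] ((g i * h') ⊗ₜ[k] (l (e i) b' * b)))
    (mulD : ((A ⊗[k] Aᵐᵒᵖ) ⊗[k] H) →ₗ[k] ((A ⊗[k] Aᵐᵒᵖ) ⊗[k] H) →ₗ[k] ((A ⊗[k] Aᵐᵒᵖ) ⊗[k] H))
    (hD : ∀ (φ φ' : A ⊗[k] Aᵐᵒᵖ) (h h' : H) (s : Finset ℕ) (f g e : ℕ → H),
      (TensorProduct.map (LinearMap.id : H →ₗ[k] H) (Coalgebra.comul (R := k))) (Coalgebra.comul (R := k) h) =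
        ∑ i ∈ s, f i ⊗ₜ[k] (g i ⊗ₜ[k] e i) →
      mulD (φ ⊗ₜ[k] h) (φ' ⊗ₜ[k] h') =
        ∑ i ∈ s, (φ * TensorProduct.map (l (f i)) (rmap k l (Sinv (e i))) φ') ⊗ₜ[k]
          (g i * h'))
    (Ψ : (A ⊗[k] (H ⊗[k] A)) →ₗ[k] ((A ⊗[k] Aᵐᵒᵖ) ⊗[k] H))
    (hΨ : ∀ (a b : A) (h : H),
      Ψ (a ⊗ₜ[k] (h ⊗ₜ[k] b)) = (a ⊗ₜ[k] MulOpposite.op b) ⊗ₜ[k] h) :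
    Function.Bijective Ψ ∧
    (∀ x y : A ⊗[k] (H ⊗[k] A), Ψ (mulCM x y) = mulD (Ψ x) (Ψ y)) ∧
    Ψ ((1 : A) ⊗ₜ[k] ((1 : H) ⊗ₜ[k] (1 : A))) = ((1 : A) ⊗ₜ[k] (1 : Aᵐᵒᵖ)) ⊗ₜ[k] (1 : H) := by
  -- the explicit equivalence
  let E : (A ⊗[k] (H ⊗[k] A)) ≃ₗ[k] ((A ⊗[k] Aᵐᵒᵖ) ⊗[k] H) :=
    (TensorProduct.congr (LinearEquiv.refl k A)
      ((TensorProduct.congr (LinearEquiv.refl k H) (MulOpposite.opLinearEquiv k)).trans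
        (TensorProduct.comm k H Aᵐᵒᵖ))).trans
      (TensorProduct.assoc k A Aᵐᵒᵖ H).symm
  have hE : ∀ (a b : A) (h : H),
      E (a ⊗ₜ[k] (h ⊗ₜ[k] b)) = (a ⊗ₜ[k] MulOpposite.op b) ⊗ₜ[k] h := by
    intro a b h
    simp [E, TensorProduct.assoc_symm_tmul]
  have hΨE : Ψ = E.toLinearMap := by
    apply TensorProduct.ext'
    intro a t
    induction t with
    | zero =>
        rw [TensorProduct.tmul_zero, LinearMap.map_zero, LinearMap.map_zero]
    | tmul h b => rw [hΨ, LinearEquiv.coe_coe, hE]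
    | add t₁ t₂ ih₁ ih₂ =>
        simp only [TensorProduct.tmul_add, LinearMap.map_add, ih₁, ih₂]
  refine ⟨by rw [hΨE]; exact E.bijective, ?_, by rw [hΨ, MulOpposite.op_one]⟩
  have key : ∀ (a b a' b' : A) (h h' : H),
      Ψ (mulCM (a ⊗ₜ[k] (h ⊗ₜ[k] b)) (a' ⊗ₜ[k] (h' ⊗ₜ[k] b'))) =
        mulD (Ψ (a ⊗ₜ[k] (h ⊗ₜ[k] b))) (Ψ (a' ⊗ₜ[k] (h' ⊗ₜ[k] b'))) := by
    intro a b a' b' h h'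
    obtain ⟨n, f, g, e, ht⟩ := aux_triple
      ((TensorProduct.map (LinearMap.id : H →ₗ[k] H) (Coalgebra.comul (R := k)))
        (Coalgebra.comul (R := k) h))
    rw [hCM a b a' b' h h' (range n) f g e ht, hΨ, hΨ,
      hD (a ⊗ₜ[k] MulOpposite.op b) (a' ⊗ₜ[k] MulOpposite.op b') h h' (range n) f g e ht,
      map_sum Ψ _ (range n)]
    refine Finset.sum_congr rfl fun i _ => ?_
    rw [hΨ]
    congr 1
    rw [TensorProduct.map_tmul]
    simp only [rmap, LinearMap.comp_apply, LinearEquiv.coe_coe,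
      MulOpposite.coe_opLinearEquiv, MulOpposite.coe_opLinearEquiv_symm,
      MulOpposite.unop_op, hSinv2]
    rw [Algebra.TensorProduct.tmul_mul_tmul, MulOpposite.op_mul]
  intro x y
  induction x with
  | zero =>
      simp only [LinearMap.map_zero, LinearMap.zero_apply]
  | add x₁ x₂ ih₁ ih₂ =>
      simp only [LinearMap.map_add, LinearMap.add_apply, ih₁, ih₂]
  | tmul a t =>
      induction t with
      | zero =>
          simp only [TensorProduct.tmul_zero, LinearMap.map_zero, LinearMap.zero_apply]
      | add t₁ t₂ ih₁ ih₂ =>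
          simp only [TensorProduct.tmul_add, LinearMap.map_add, LinearMap.add_apply, ih₁, ih₂]
      | tmul h b =>
          induction y with
          | zero => simp only [LinearMap.map_zero]
          | add y₁ y₂ ih₁ ih₂ => simp only [LinearMap.map_add, ih₁, ih₂]
          | tmul a' t' =>
              induction t' with
              | zero =>
                  simp only [TensorProduct.tmul_zero, LinearMap.map_zero]
              | add s₁ s₂ ih₁ ih₂ =>
                  simp only [TensorProduct.tmul_add, LinearMap.map_add, ih₁, ih₂]
              | tmul h' b' => exact key a b a' b' h h'
end

section
/- The linear map Φ : A^e ◇ H → A ⊙ H ⊙ A given by Φ(a⊗b⊗h) = a ⊗ h₁ ⊗ (h₂·b) is an algebra isomorphism, with inverse Φ⁻¹(a⊗h⊗b) = a ⊗ (S(h₂)·b) ⊗ h₁. -/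
open scoped TensorProduct
open Finset

section stmt8aux
variable {k : Type} [Field k]



private lemma list_sum_getD {α β : Type*} [AddCommMonoid β] (d : α) (F : α → β) :
    ∀ L : List α, (L.map F).sum = ∑ i ∈ Finset.range L.length, F (L.getD i d)
  | [] => by simp
  | a :: tl => by
    rw [List.map_cons, List.sum_cons, list_sum_getD d F tl, List.length_cons,
      Finset.sum_range_succ']
    simp [add_comm]

private lemma exists_nat_rep {M N : Type*} [AddCommMonoid M] [AddCommMonoid N]
    [Module k M] [Module k N] (x : M ⊗[k] N) :
    ∃ (s : Finset ℕ) (f : ℕ → M) (g : ℕ → N), x = ∑ i ∈ s, f i ⊗ₜ[k] g i := by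
  obtain ⟨S, hS⟩ := TensorProduct.exists_finset (R := k) x
  refine ⟨Finset.range S.toList.length, fun i => (S.toList.getD i 0).1,
    fun i => (S.toList.getD i 0).2, ?_⟩
  rw [hS, ← Finset.sum_map_toList]
  exact list_sum_getD (0, 0) (fun p => p.1 ⊗ₜ[k] p.2) S.toList

private lemma pair_sum {β : Type*} [AddCommMonoid β] (s : Finset ℕ) (t : ℕ → Finset ℕ)
    (F : ℕ → ℕ → β) :
    ∑ n ∈ (s.sigma t).image (fun p => Nat.pair p.1 p.2),
      F (Nat.unpair n).1 (Nat.unpair n).2 = ∑ i ∈ s, ∑ j ∈ t i, F i j := by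
  rw [Finset.sum_image]
  · rw [Finset.sum_sigma]
    exact Finset.sum_congr rfl fun p _ => by simp [Nat.unpair_pair]
  · intro x _ y _ hxy
    have := congrArg Nat.unpair hxy
    simp only [Nat.unpair_pair] at this
    obtain ⟨x1, x2⟩ := x; obtain ⟨y1, y2⟩ := y
    simp only [Prod.mk.injEq] at this
    simp [this.1, this.2]




private lemma sum_comm4 {β : Type*} [AddCommMonoid β] (s t : Finset ℕ)
    (u : ℕ → Finset ℕ) (v : ℕ → ℕ → Finset ℕ) (G : ℕ → ℕ → ℕ → ℕ → β) :
    ∑ i ∈ s, ∑ m ∈ u i, ∑ p ∈ v i m, ∑ j ∈ t, G i m p j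
      = ∑ j ∈ t, ∑ i ∈ s, ∑ m ∈ u i, ∑ p ∈ v i m, G i m p j := by
  calc ∑ i ∈ s, ∑ m ∈ u i, ∑ p ∈ v i m, ∑ j ∈ t, G i m p j
      = ∑ i ∈ s, ∑ m ∈ u i, ∑ j ∈ t, ∑ p ∈ v i m, G i m p j :=
        Finset.sum_congr rfl fun i _ => Finset.sum_congr rfl fun m _ => Finset.sum_comm
    _ = ∑ i ∈ s, ∑ j ∈ t, ∑ m ∈ u i, ∑ p ∈ v i m, G i m p j :=
        Finset.sum_congr rfl fun i _ => Finset.sum_comm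
    _ = ∑ j ∈ t, ∑ i ∈ s, ∑ m ∈ u i, ∑ p ∈ v i m, G i m p j := Finset.sum_comm

private lemma sum_comm6 {β : Type*} [AddCommMonoid β] (s t : Finset ℕ)
    (u : ℕ → Finset ℕ) (w : ℕ → Finset ℕ) (v : ℕ → ℕ → Finset ℕ) (x : ℕ → ℕ → Finset ℕ)
    (G : ℕ → ℕ → ℕ → ℕ → ℕ → ℕ → β) :
    ∑ i ∈ s, ∑ j ∈ t, ∑ m ∈ u i, ∑ n ∈ w j, ∑ p ∈ v i m, ∑ q ∈ x j n, G i j m n p q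
      = ∑ i ∈ s, ∑ m ∈ u i, ∑ p ∈ v i m, ∑ j ∈ t, ∑ n ∈ w j, ∑ q ∈ x j n, G i j m n p q := by
  calc ∑ i ∈ s, ∑ j ∈ t, ∑ m ∈ u i, ∑ n ∈ w j, ∑ p ∈ v i m, ∑ q ∈ x j n, G i j m n p q
      = ∑ i ∈ s, ∑ j ∈ t, ∑ m ∈ u i, ∑ p ∈ v i m, ∑ n ∈ w j, ∑ q ∈ x j n, G i j m n p q :=
        Finset.sum_congr rfl fun i _ => Finset.sum_congr rfl fun j _ =>
          Finset.sum_congr rfl fun m _ => Finset.sum_comm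
    _ = ∑ i ∈ s, ∑ m ∈ u i, ∑ j ∈ t, ∑ p ∈ v i m, ∑ n ∈ w j, ∑ q ∈ x j n, G i j m n p q :=
        Finset.sum_congr rfl fun i _ => Finset.sum_comm
    _ = ∑ i ∈ s, ∑ m ∈ u i, ∑ p ∈ v i m, ∑ j ∈ t, ∑ n ∈ w j, ∑ q ∈ x j n, G i j m n p q :=
        Finset.sum_congr rfl fun i _ => Finset.sum_congr rfl fun m _ => Finset.sum_comm

variable {H : Type} [Ring H] [HopfAlgebra k H]

local notation "Δ" => Coalgebra.comul (R := k)
local notation "𝒮" => HopfAlgebra.antipode (R := k) (A := H)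

private lemma mul_rep (u v : H) (su : Finset ℕ) (fu gu : ℕ → H)
    (hu : Δ u = ∑ i ∈ su, fu i ⊗ₜ[k] gu i)
    (sv : Finset ℕ) (fv gv : ℕ → H)
    (hv : Δ v = ∑ j ∈ sv, fv j ⊗ₜ[k] gv j) :
    Δ (u * v) = ∑ n ∈ ((su.sigma fun _ => sv).image fun p => Nat.pair p.1 p.2),
      (fu (Nat.unpair n).1 * fv (Nat.unpair n).2) ⊗ₜ[k]
        (gu (Nat.unpair n).1 * gv (Nat.unpair n).2) := by
  rw [Bialgebra.comul_mul, hu, hv, Finset.sum_mul_sum,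
    pair_sum su (fun _ => sv) (fun i j => (fu i * fv j) ⊗ₜ[k] (gu i * gv j))]
  exact Finset.sum_congr rfl fun i _ => Finset.sum_congr rfl fun j _ =>
    Algebra.TensorProduct.tmul_mul_tmul _ _ _ _

private lemma triple_rep (h : H) (s : Finset ℕ) (f g : ℕ → H)
    (hr : Δ h = ∑ i ∈ s, f i ⊗ₜ[k] g i)
    (t : ℕ → Finset ℕ) (P Q : ℕ → ℕ → H)
    (hg : ∀ i ∈ s, Δ (g i) = ∑ m ∈ t i, P i m ⊗ₜ[k] Q i m) :
    (TensorProduct.map (LinearMap.id : H →ₗ[k] H) Δ) (Δ h)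
      = ∑ n ∈ ((s.sigma t).image fun p => Nat.pair p.1 p.2),
          f (Nat.unpair n).1 ⊗ₜ[k]
            (P (Nat.unpair n).1 (Nat.unpair n).2 ⊗ₜ[k] Q (Nat.unpair n).1 (Nat.unpair n).2) := by
  rw [pair_sum s t (fun i m => f i ⊗ₜ[k] (P i m ⊗ₜ[k] Q i m)), hr, map_sum]
  refine Finset.sum_congr rfl fun i hi => ?_
  rw [TensorProduct.map_tmul, LinearMap.id_apply, hg i hi, TensorProduct.tmul_sum]



private lemma unit_right (x : H) :
    LinearMap.lTensor H (Algebra.linearMap k H ∘ₗ Coalgebra.counit (R := k)) (Δ x)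
      = x ⊗ₜ[k] (1 : H) := by
  rw [LinearMap.lTensor_comp, LinearMap.comp_apply, Coalgebra.lTensor_counit_comul]
  simp

private lemma threeExp_g (h : H) (s : Finset ℕ) (f g : ℕ → H)
    (hr : Δ h = ∑ i ∈ s, f i ⊗ₜ[k] g i)
    (t : ℕ → Finset ℕ) (P Q : ℕ → ℕ → H)
    (hg : ∀ i ∈ s, Δ (g i) = ∑ m ∈ t i, P i m ⊗ₜ[k] Q i m) :
    ∑ i ∈ s, ∑ m ∈ t i, f i ⊗ₜ[k] (P i m ⊗ₜ[k] Q i m)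
      = LinearMap.lTensor H Δ (Δ h) := by
  rw [hr, map_sum]
  refine Finset.sum_congr rfl fun i hi => ?_
  rw [LinearMap.lTensor_tmul, hg i hi, TensorProduct.tmul_sum]

private lemma threeExp_f (h : H) (s : Finset ℕ) (f g : ℕ → H)
    (hr : Δ h = ∑ i ∈ s, f i ⊗ₜ[k] g i)
    (t : ℕ → Finset ℕ) (F G : ℕ → ℕ → H)
    (hf : ∀ i ∈ s, Δ (f i) = ∑ m ∈ t i, F i m ⊗ₜ[k] G i m) :
    ∑ i ∈ s, ∑ m ∈ t i, F i m ⊗ₜ[k] (G i m ⊗ₜ[k] g i)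
      = LinearMap.lTensor H Δ (Δ h) := by
  rw [← Coalgebra.coassoc_apply, hr, map_sum, map_sum]
  refine Finset.sum_congr rfl fun i hi => ?_
  rw [LinearMap.rTensor_tmul, hf i hi, TensorProduct.sum_tmul, map_sum]
  exact Finset.sum_congr rfl fun m _ => by rw [TensorProduct.assoc_tmul]

private lemma sCollapse (h : H) (s : Finset ℕ) (f g : ℕ → H)
    (hr : Δ h = ∑ i ∈ s, f i ⊗ₜ[k] g i)
    (t : ℕ → Finset ℕ) (F G : ℕ → ℕ → H)
    (hf : ∀ i ∈ s, Δ (f i) = ∑ m ∈ t i, F i m ⊗ₜ[k] G i m) :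
    ∑ i ∈ s, ∑ m ∈ t i, F i m ⊗ₜ[k] (𝒮 (G i m) * g i) = h ⊗ₜ[k] (1 : H) := by
  have e := congrArg
    (LinearMap.lTensor H (LinearMap.mul' k H ∘ₗ LinearMap.rTensor H 𝒮))
    (threeExp_f h s f g hr t F G hf)
  simp only [map_sum, LinearMap.lTensor_tmul, LinearMap.comp_apply,
    LinearMap.rTensor_tmul, LinearMap.mul'_apply] at e
  rw [e, ← LinearMap.comp_apply, ← LinearMap.lTensor_comp, LinearMap.comp_assoc,
    HopfAlgebra.mul_antipode_rTensor_comul, unit_right]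

private lemma sCollapse' (h : H) (s : Finset ℕ) (f g : ℕ → H)
    (hr : Δ h = ∑ i ∈ s, f i ⊗ₜ[k] g i)
    (t : ℕ → Finset ℕ) (F G : ℕ → ℕ → H)
    (hf : ∀ i ∈ s, Δ (f i) = ∑ m ∈ t i, F i m ⊗ₜ[k] G i m) :
    ∑ i ∈ s, ∑ m ∈ t i, F i m ⊗ₜ[k] (G i m * 𝒮 (g i)) = h ⊗ₜ[k] (1 : H) := by
  have e := congrArg
    (LinearMap.lTensor H (LinearMap.mul' k H ∘ₗ LinearMap.lTensor H 𝒮))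
    (threeExp_f h s f g hr t F G hf)
  simp only [map_sum, LinearMap.lTensor_tmul, LinearMap.comp_apply,
    LinearMap.mul'_apply] at e
  rw [e, ← LinearMap.comp_apply, ← LinearMap.lTensor_comp, LinearMap.comp_assoc,
    HopfAlgebra.mul_antipode_lTensor_comul, unit_right]

private lemma fourA (h : H) (s : Finset ℕ) (f g : ℕ → H)
    (hr : Δ h = ∑ i ∈ s, f i ⊗ₜ[k] g i)
    (t : ℕ → Finset ℕ) (P Q : ℕ → ℕ → H)
    (hg : ∀ i ∈ s, Δ (g i) = ∑ m ∈ t i, P i m ⊗ₜ[k] Q i m)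
    (v : ℕ → ℕ → Finset ℕ) (R T : ℕ → ℕ → ℕ → H)
    (hQ : ∀ i ∈ s, ∀ m ∈ t i, Δ (Q i m) = ∑ p ∈ v i m, R i m p ⊗ₜ[k] T i m p) :
    ∑ i ∈ s, ∑ m ∈ t i, ∑ p ∈ v i m,
        f i ⊗ₜ[k] (P i m ⊗ₜ[k] (R i m p ⊗ₜ[k] T i m p))
      = LinearMap.lTensor H (LinearMap.lTensor H Δ)
          (LinearMap.lTensor H Δ (Δ h)) := by
  have e := congrArg (LinearMap.lTensor H (LinearMap.lTensor H Δ))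
    (threeExp_g h s f g hr t P Q hg)
  rw [← e, map_sum]
  refine Finset.sum_congr rfl fun i hi => ?_
  rw [map_sum]
  refine Finset.sum_congr rfl fun m hm => ?_
  rw [LinearMap.lTensor_tmul, LinearMap.lTensor_tmul, hQ i hi m hm,
    TensorProduct.tmul_sum, TensorProduct.tmul_sum]

private lemma fourB (h : H) (s : Finset ℕ) (f g : ℕ → H)
    (hr : Δ h = ∑ i ∈ s, f i ⊗ₜ[k] g i)
    (t : ℕ → Finset ℕ) (D E : ℕ → ℕ → H)
    (hf : ∀ i ∈ s, Δ (f i) = ∑ m ∈ t i, D i m ⊗ₜ[k] E i m)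
    (v : ℕ → ℕ → Finset ℕ) (X Y : ℕ → ℕ → ℕ → H)
    (hE : ∀ i ∈ s, ∀ m ∈ t i, Δ (E i m) = ∑ p ∈ v i m, X i m p ⊗ₜ[k] Y i m p) :
    ∑ i ∈ s, ∑ m ∈ t i, ∑ p ∈ v i m,
        D i m ⊗ₜ[k] (X i m p ⊗ₜ[k] (Y i m p ⊗ₜ[k] g i))
      = LinearMap.lTensor H (LinearMap.lTensor H Δ)
          (LinearMap.lTensor H Δ (Δ h)) := by
  have e := congrArg
    (LinearMap.lTensor H
      ((TensorProduct.assoc k H H H).toLinearMap ∘ₗ LinearMap.rTensor H Δ))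
    (threeExp_f h s f g hr t D E hf)
  have lhs : LinearMap.lTensor H
      ((TensorProduct.assoc k H H H).toLinearMap ∘ₗ LinearMap.rTensor H Δ)
      (∑ i ∈ s, ∑ m ∈ t i, D i m ⊗ₜ[k] (E i m ⊗ₜ[k] g i))
      = ∑ i ∈ s, ∑ m ∈ t i, ∑ p ∈ v i m,
          D i m ⊗ₜ[k] (X i m p ⊗ₜ[k] (Y i m p ⊗ₜ[k] g i)) := by
    rw [map_sum]
    refine Finset.sum_congr rfl fun i hi => ?_
    rw [map_sum]
    refine Finset.sum_congr rfl fun m hm => ?_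
    rw [LinearMap.lTensor_tmul, LinearMap.comp_apply, LinearMap.rTensor_tmul,
      hE i hi m hm, TensorProduct.sum_tmul, map_sum, TensorProduct.tmul_sum]
    refine Finset.sum_congr rfl fun p _ => ?_
    simp [TensorProduct.assoc_tmul]
  rw [lhs] at e
  rw [e]
  conv_lhs => rw [← LinearMap.comp_apply, ← LinearMap.lTensor_comp, LinearMap.comp_assoc,
    Coalgebra.coassoc, LinearMap.lTensor_comp, LinearMap.comp_apply]

private lemma acollapse (h : H) (s : Finset ℕ) (f g : ℕ → H)
    (hr : Δ h = ∑ i ∈ s, f i ⊗ₜ[k] g i)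
    (t : ℕ → Finset ℕ) (F G : ℕ → ℕ → H)
    (hf : ∀ i ∈ s, Δ (f i) = ∑ m ∈ t i, F i m ⊗ₜ[k] G i m)
    (w : ℕ → ℕ → Finset ℕ) (U V : ℕ → ℕ → ℕ → H)
    (hG : ∀ i ∈ s, ∀ m ∈ t i, Δ (G i m) = ∑ q ∈ w i m, U i m q ⊗ₜ[k] V i m q) :
    ∑ i ∈ s, ∑ m ∈ t i, ∑ q ∈ w i m,
        F i m ⊗ₜ[k] (U i m q ⊗ₜ[k] (V i m q * 𝒮 (g i)))
      = ∑ i ∈ s, f i ⊗ₜ[k] (g i ⊗ₜ[k] (1 : H)) := by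
  have e := congrArg
    (LinearMap.lTensor H (LinearMap.lTensor H (LinearMap.mul' k H ∘ₗ LinearMap.lTensor H 𝒮)))
    (fourB h s f g hr t F G hf w U V hG)
  simp only [map_sum, LinearMap.lTensor_tmul, LinearMap.comp_apply,
    LinearMap.mul'_apply] at e
  rw [e]
  -- RHS : lTensor (lTensor μ) (lTensor (lTensor Δ) (lTensor Δ (Δ h)))
  rw [← LinearMap.comp_apply, ← LinearMap.lTensor_comp, ← LinearMap.lTensor_comp]
  have : ((LinearMap.mul' k H ∘ₗ LinearMap.lTensor H 𝒮) ∘ₗ (Δ : H →ₗ[k] H ⊗[k] H))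
      = Algebra.linearMap k H ∘ₗ Coalgebra.counit (R := k) (A := H) := by
    rw [LinearMap.comp_assoc]
    exact HopfAlgebra.mul_antipode_lTensor_comul
  rw [this, hr]
  simp only [map_sum]
  refine Finset.sum_congr rfl fun i hi => ?_
  rw [LinearMap.lTensor_tmul, LinearMap.lTensor_tmul, unit_right (k := k) (g i)]


end stmt8aux

set_option maxHeartbeats 3000000

/-- `Φ(a⊗b⊗h) = a ⊗ h₁ ⊗ (h₂·b)` is an algebra isomorphism from Kadison's
algebra `A^e ◇ H` to the Connes-Moscovici algebra `A ⊙ H ⊙ A`, with inverse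
`Φ'(a⊗h⊗b) = a ⊗ (S(h₂)·b) ⊗ h₁`. -/
theorem stmt_8 (k H A : Type) [Field k] [Ring H] [HopfAlgebra k H]
    [Ring A] [Algebra k A]
    (hbij : Function.Bijective (HopfAlgebra.antipode (R := k) (A := H)))
    (l : H →ₗ[k] A →ₗ[k] A)
    (hl_one : ∀ a : A, l 1 a = a)
    (hl_mul : ∀ (h h' : H) (a : A), l (h * h') a = l h (l h' a))
    (hl_unit : ∀ h : H, l h (1 : A) = Coalgebra.counit (R := k) h • (1 : A))
    (hl_meas : ∀ (h : H) (a b : A) (s : Finset ℕ) (f g : ℕ → H),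
      Coalgebra.comul (R := k) h = ∑ i ∈ s, f i ⊗ₜ[k] g i →
      l h (a * b) = ∑ i ∈ s, l (f i) a * l (g i) b)
    (mulK : ((A ⊗[k] A) ⊗[k] H) →ₗ[k] ((A ⊗[k] A) ⊗[k] H) →ₗ[k] ((A ⊗[k] A) ⊗[k] H))
    (hK : ∀ (a b a' b' : A) (h h' : H) (s t : Finset ℕ) (f g f' g' : ℕ → H),
      Coalgebra.comul (R := k) h = ∑ i ∈ s, f i ⊗ₜ[k] g i →
      Coalgebra.comul (R := k) h' = ∑ j ∈ t, f' j ⊗ₜ[k] g' j →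
      mulK ((a ⊗ₜ[k] b) ⊗ₜ[k] h) ((a' ⊗ₜ[k] b') ⊗ₜ[k] h') =
        ∑ i ∈ s, ∑ j ∈ t,
          ((a * l (f i) a') ⊗ₜ[k] (b' * l (HopfAlgebra.antipode (R := k) (g' j)) b)) ⊗ₜ[k] (g i * f' j))
    (mulCM : (A ⊗[k] (H ⊗[k] A)) →ₗ[k] (A ⊗[k] (H ⊗[k] A)) →ₗ[k] (A ⊗[k] (H ⊗[k] A)))
    (hCM : ∀ (a b a' b' : A) (h h' : H) (s : Finset ℕ) (f g e : ℕ → H),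
      (TensorProduct.map (LinearMap.id : H →ₗ[k] H) (Coalgebra.comul (R := k))) (Coalgebra.comul (R := k) h) =
        ∑ i ∈ s, f i ⊗ₜ[k] (g i ⊗ₜ[k] e i) →
      mulCM (a ⊗ₜ[k] (h ⊗ₜ[k] b)) (a' ⊗ₜ[k] (h' ⊗ₜ[k] b')) =
        ∑ i ∈ s, (a * l (f i) a') ⊗ₜ[k] ((g i * h') ⊗ₜ[k] (l (e i) b' * b)))
    (Φ : ((A ⊗[k] A) ⊗[k] H) →ₗ[k] (A ⊗[k] (H ⊗[k] A)))
    (hΦ : ∀ (a b : A) (h : H) (s : Finset ℕ) (f g : ℕ → H),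
      Coalgebra.comul (R := k) h = ∑ i ∈ s, f i ⊗ₜ[k] g i →
      Φ ((a ⊗ₜ[k] b) ⊗ₜ[k] h) = ∑ i ∈ s, a ⊗ₜ[k] (f i ⊗ₜ[k] l (g i) b))
    (Φ' : (A ⊗[k] (H ⊗[k] A)) →ₗ[k] ((A ⊗[k] A) ⊗[k] H))
    (hΦ' : ∀ (a b : A) (h : H) (s : Finset ℕ) (f g : ℕ → H),
      Coalgebra.comul (R := k) h = ∑ i ∈ s, f i ⊗ₜ[k] g i →
      Φ' (a ⊗ₜ[k] (h ⊗ₜ[k] b)) = ∑ i ∈ s, (a ⊗ₜ[k] l (HopfAlgebra.antipode (R := k) (g i)) b) ⊗ₜ[k] f i) :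
    (∀ x y : (A ⊗[k] A) ⊗[k] H, Φ (mulK x y) = mulCM (Φ x) (Φ y)) ∧
    Φ (((1 : A) ⊗ₜ[k] (1 : A)) ⊗ₜ[k] (1 : H)) = (1 : A) ⊗ₜ[k] ((1 : H) ⊗ₜ[k] (1 : A)) ∧
    (∀ x : (A ⊗[k] A) ⊗[k] H, Φ' (Φ x) = x) ∧
    (∀ y : A ⊗[k] (H ⊗[k] A), Φ (Φ' y) = y) := by
  have hrepAll : ∀ x : H, ∃ (s : Finset ℕ) (f g : ℕ → H),
      Coalgebra.comul (R := k) x = ∑ i ∈ s, f i ⊗ₜ[k] g i := fun x => exists_nat_rep _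
  choose rs rf rg hr using hrepAll
  refine ⟨?_, ?_, ?_, ?_⟩
  · -- multiplicativity
    have g1 : ∀ (a b a' b' : A) (h h' : H),
        Φ (mulK ((a ⊗ₜ[k] b) ⊗ₜ[k] h) ((a' ⊗ₜ[k] b') ⊗ₜ[k] h'))
          = mulCM (Φ ((a ⊗ₜ[k] b) ⊗ₜ[k] h)) (Φ ((a' ⊗ₜ[k] b') ⊗ₜ[k] h')) := by
      intro a b a' b' h h'
      -- LEFT SIDE --------------------------------------------------------
      have L1 : Φ (mulK ((a ⊗ₜ[k] b) ⊗ₜ[k] h) ((a' ⊗ₜ[k] b') ⊗ₜ[k] h'))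
          = ∑ i ∈ rs h, ∑ j ∈ rs h',
              Φ (((a * l (rf h i) a') ⊗ₜ[k]
                  (b' * l (HopfAlgebra.antipode (R := k) (rg h' j)) b)) ⊗ₜ[k]
                    (rg h i * rf h' j)) := by
        rw [hK a b a' b' h h' _ _ _ _ _ _ (hr h) (hr h'), map_sum]
        exact Finset.sum_congr rfl fun i _ => map_sum _ _ _
      have L3 : ∀ (i j m n : ℕ),
          l (rg (rg h i) m * rg (rf h' j) n)
              (b' * l (HopfAlgebra.antipode (R := k) (rg h' j)) b)
            = ∑ p ∈ rs (rg (rg h i) m), ∑ q ∈ rs (rg (rf h' j) n),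
                l (rf (rg (rg h i) m) p * rf (rg (rf h' j) n) q) b' *
                l (rg (rg (rg h i) m) p *
                    (rg (rg (rf h' j) n) q * HopfAlgebra.antipode (R := k) (rg h' j))) b := by
        intro i j m n
        calc l (rg (rg h i) m * rg (rf h' j) n)
              (b' * l (HopfAlgebra.antipode (R := k) (rg h' j)) b)
            = ∑ n' ∈ (((rs (rg (rg h i) m)).sigma fun _ => rs (rg (rf h' j) n)).image
                  fun p => Nat.pair p.1 p.2),
                l (rf (rg (rg h i) m) (Nat.unpair n').1 * rf (rg (rf h' j) n) (Nat.unpair n').2)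
                    b' *
                  l (rg (rg (rg h i) m) (Nat.unpair n').1 * rg (rg (rf h' j) n) (Nat.unpair n').2)
                    (l (HopfAlgebra.antipode (R := k) (rg h' j)) b) := by
              exact hl_meas _ b' _ _ _ _
                (mul_rep _ _ _ _ _ (hr (rg (rg h i) m)) _ _ _ (hr (rg (rf h' j) n)))
          _ = ∑ p ∈ rs (rg (rg h i) m), ∑ q ∈ rs (rg (rf h' j) n),
                l (rf (rg (rg h i) m) p * rf (rg (rf h' j) n) q) b' *
                  l (rg (rg (rg h i) m) p * rg (rg (rf h' j) n) q)
                    (l (HopfAlgebra.antipode (R := k) (rg h' j)) b) :=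
              pair_sum (rs (rg (rg h i) m)) (fun _ => rs (rg (rf h' j) n))
                (fun p q => l (rf (rg (rg h i) m) p * rf (rg (rf h' j) n) q) b' *
                  l (rg (rg (rg h i) m) p * rg (rg (rf h' j) n) q)
                    (l (HopfAlgebra.antipode (R := k) (rg h' j)) b))
          _ = _ := by
              refine Finset.sum_congr rfl fun p _ => Finset.sum_congr rfl fun q _ => ?_
              rw [← hl_mul, mul_assoc]
      have L4 : ∀ i ∈ rs h, ∀ j ∈ rs h',
          Φ (((a * l (rf h i) a') ⊗ₜ[k]
              (b' * l (HopfAlgebra.antipode (R := k) (rg h' j)) b)) ⊗ₜ[k]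
                (rg h i * rf h' j))
            = ∑ m ∈ rs (rg h i), ∑ n ∈ rs (rf h' j),
                ∑ p ∈ rs (rg (rg h i) m), ∑ q ∈ rs (rg (rf h' j) n),
                (a * l (rf h i) a') ⊗ₜ[k]
                  ((rf (rg h i) m * rf (rf h' j) n) ⊗ₜ[k]
                    (l (rf (rg (rg h i) m) p * rf (rg (rf h' j) n) q) b' *
                     l (rg (rg (rg h i) m) p *
                        (rg (rg (rf h' j) n) q * HopfAlgebra.antipode (R := k) (rg h' j))) b)) := by
        intro i _ j _
        rw [hΦ _ _ _ _ _ _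
          (mul_rep (rg h i) (rf h' j) _ _ _ (hr (rg h i)) _ _ _ (hr (rf h' j)))]
        calc (∑ n' ∈ (((rs (rg h i)).sigma fun _ => rs (rf h' j)).image
                fun p => Nat.pair p.1 p.2),
              (a * l (rf h i) a') ⊗ₜ[k]
                ((rf (rg h i) (Nat.unpair n').1 * rf (rf h' j) (Nat.unpair n').2) ⊗ₜ[k]
                  l (rg (rg h i) (Nat.unpair n').1 * rg (rf h' j) (Nat.unpair n').2)
                    (b' * l (HopfAlgebra.antipode (R := k) (rg h' j)) b)))
            = ∑ m ∈ rs (rg h i), ∑ n ∈ rs (rf h' j),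
                (a * l (rf h i) a') ⊗ₜ[k]
                  ((rf (rg h i) m * rf (rf h' j) n) ⊗ₜ[k]
                    l (rg (rg h i) m * rg (rf h' j) n)
                      (b' * l (HopfAlgebra.antipode (R := k) (rg h' j)) b)) :=
              pair_sum (rs (rg h i)) (fun _ => rs (rf h' j))
                (fun m n => (a * l (rf h i) a') ⊗ₜ[k]
                  ((rf (rg h i) m * rf (rf h' j) n) ⊗ₜ[k]
                    l (rg (rg h i) m * rg (rf h' j) n)
                      (b' * l (HopfAlgebra.antipode (R := k) (rg h' j)) b)))
          _ = _ := by
              refine Finset.sum_congr rfl fun m _ => Finset.sum_congr rfl fun n _ => ?_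
              rw [L3 i j m n]
              simp only [TensorProduct.tmul_sum]
      -- step A : collapse the h' side
      have SA : ∀ (x₁ x₂ x₃ x₄ : H),
          ∑ j ∈ rs h', ∑ n ∈ rs (rf h' j), ∑ q ∈ rs (rg (rf h' j) n),
              (a * l x₁ a') ⊗ₜ[k]
                ((x₂ * rf (rf h' j) n) ⊗ₜ[k]
                  (l (x₃ * rf (rg (rf h' j) n) q) b' *
                   l (x₄ * (rg (rg (rf h' j) n) q * HopfAlgebra.antipode (R := k) (rg h' j))) b))
            = ∑ j ∈ rs h',
                (a * l x₁ a') ⊗ₜ[k]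
                  ((x₂ * rf h' j) ⊗ₜ[k] (l (x₃ * rg h' j) b' * l x₄ b)) := by
        intro x₁ x₂ x₃ x₄
        have key := congrArg
          (TensorProduct.mk k A (H ⊗[k] A) (a * l x₁ a') ∘ₗ
            LinearMap.lTensor H (LinearMap.mul' k A) ∘ₗ
            TensorProduct.map (LinearMap.mulLeft k x₂)
              (TensorProduct.map (l.flip b' ∘ₗ LinearMap.mulLeft k x₃)
                (l.flip b ∘ₗ LinearMap.mulLeft k x₄)))
          (acollapse h' (rs h') (rf h') (rg h') (hr h')
            (fun j => rs (rf h' j)) (fun j n => rf (rf h' j) n) (fun j n => rg (rf h' j) n)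
            (fun j _ => hr (rf h' j))
            (fun j n => rs (rg (rf h' j) n)) (fun j n q => rf (rg (rf h' j) n) q)
            (fun j n q => rg (rg (rf h' j) n) q)
            (fun j _ n _ => hr (rg (rf h' j) n)))
        simp only [map_sum, LinearMap.coe_comp, Function.comp_apply, TensorProduct.map_tmul,
          LinearMap.lTensor_tmul, LinearMap.mul'_apply, TensorProduct.mk_apply,
          LinearMap.flip_apply, LinearMap.mulLeft_apply, mul_one] at key
        exact key
      -- step B : reassociate the h side
      have SB : ∀ (j : ℕ),
          ∑ i ∈ rs h, ∑ m ∈ rs (rg h i), ∑ p ∈ rs (rg (rg h i) m),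
              (a * l (rf h i) a') ⊗ₜ[k]
                ((rf (rg h i) m * rf h' j) ⊗ₜ[k]
                  (l (rf (rg (rg h i) m) p * rg h' j) b' * l (rg (rg (rg h i) m) p) b))
            = ∑ i ∈ rs h, ∑ m ∈ rs (rf h i), ∑ p ∈ rs (rg (rf h i) m),
                (a * l (rf (rf h i) m) a') ⊗ₜ[k]
                  ((rf (rg (rf h i) m) p * rf h' j) ⊗ₜ[k]
                    (l (rg (rg (rf h i) m) p * rg h' j) b' * l (rg h i) b)) := by
        intro j
        have e := (fourA h (rs h) (rf h) (rg h) (hr h)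
            (fun i => rs (rg h i)) (fun i m => rf (rg h i) m) (fun i m => rg (rg h i) m)
            (fun i _ => hr (rg h i))
            (fun i m => rs (rg (rg h i) m)) (fun i m p => rf (rg (rg h i) m) p)
            (fun i m p => rg (rg (rg h i) m) p) (fun i _ m _ => hr (rg (rg h i) m))).trans
          (fourB h (rs h) (rf h) (rg h) (hr h)
            (fun i => rs (rf h i)) (fun i m => rf (rf h i) m) (fun i m => rg (rf h i) m)
            (fun i _ => hr (rf h i))
            (fun i m => rs (rg (rf h i) m)) (fun i m p => rf (rg (rf h i) m) p)
            (fun i m p => rg (rg (rf h i) m) p) (fun i _ m _ => hr (rg (rf h i) m))).symm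
        have key := congrArg
          (TensorProduct.map (LinearMap.mulLeft k a ∘ₗ l.flip a')
            (LinearMap.lTensor H (LinearMap.mul' k A) ∘ₗ
              TensorProduct.map (LinearMap.mulRight k (rf h' j))
                (TensorProduct.map (l.flip b' ∘ₗ LinearMap.mulRight k (rg h' j)) (l.flip b)))) e
        simp only [map_sum, LinearMap.coe_comp, Function.comp_apply, TensorProduct.map_tmul,
          LinearMap.lTensor_tmul, LinearMap.mul'_apply, LinearMap.flip_apply,
          LinearMap.mulLeft_apply, LinearMap.mulRight_apply] at key
        exact key
      -- RIGHT SIDE -------------------------------------------------------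
      have R2 : ∀ i ∈ rs h, ∀ j ∈ rs h',
          mulCM (a ⊗ₜ[k] (rf h i ⊗ₜ[k] l (rg h i) b))
              (a' ⊗ₜ[k] (rf h' j ⊗ₜ[k] l (rg h' j) b'))
            = ∑ m ∈ rs (rf h i), ∑ p ∈ rs (rg (rf h i) m),
                (a * l (rf (rf h i) m) a') ⊗ₜ[k]
                  ((rf (rg (rf h i) m) p * rf h' j) ⊗ₜ[k]
                    (l (rg (rg (rf h i) m) p * rg h' j) b' * l (rg h i) b)) := by
        intro i _ j _
        rw [hCM a (l (rg h i) b) a' (l (rg h' j) b') (rf h i) (rf h' j) _ _ _ _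
          (triple_rep (rf h i) _ _ _ (hr (rf h i)) _ _ _ (fun m _ => hr (rg (rf h i) m)))]
        calc (∑ n' ∈ (((rs (rf h i)).sigma fun m => rs (rg (rf h i) m)).image
                fun p => Nat.pair p.1 p.2),
              (a * l (rf (rf h i) (Nat.unpair n').1) a') ⊗ₜ[k]
                ((rf (rg (rf h i) (Nat.unpair n').1) (Nat.unpair n').2 * rf h' j) ⊗ₜ[k]
                  (l (rg (rg (rf h i) (Nat.unpair n').1) (Nat.unpair n').2)
                      (l (rg h' j) b') * l (rg h i) b)))
            = ∑ m ∈ rs (rf h i), ∑ p ∈ rs (rg (rf h i) m),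
                (a * l (rf (rf h i) m) a') ⊗ₜ[k]
                  ((rf (rg (rf h i) m) p * rf h' j) ⊗ₜ[k]
                    (l (rg (rg (rf h i) m) p) (l (rg h' j) b') * l (rg h i) b)) :=
              pair_sum (rs (rf h i)) (fun m => rs (rg (rf h i) m))
                (fun m p => (a * l (rf (rf h i) m) a') ⊗ₜ[k]
                  ((rf (rg (rf h i) m) p * rf h' j) ⊗ₜ[k]
                    (l (rg (rg (rf h i) m) p) (l (rg h' j) b') * l (rg h i) b)))
          _ = _ := by
              refine Finset.sum_congr rfl fun m _ => Finset.sum_congr rfl fun p _ => ?_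
              rw [← hl_mul]
      have R1 : mulCM (Φ ((a ⊗ₜ[k] b) ⊗ₜ[k] h)) (Φ ((a' ⊗ₜ[k] b') ⊗ₜ[k] h'))
          = ∑ i ∈ rs h, ∑ j ∈ rs h',
              mulCM (a ⊗ₜ[k] (rf h i ⊗ₜ[k] l (rg h i) b))
                (a' ⊗ₜ[k] (rf h' j ⊗ₜ[k] l (rg h' j) b')) := by
        rw [hΦ a b h _ _ _ (hr h), hΦ a' b' h' _ _ _ (hr h'),
          map_sum mulCM _ (rs h), LinearMap.sum_apply]
        exact Finset.sum_congr rfl fun i _ => map_sum _ _ _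
      -- ASSEMBLE ---------------------------------------------------------
      calc Φ (mulK ((a ⊗ₜ[k] b) ⊗ₜ[k] h) ((a' ⊗ₜ[k] b') ⊗ₜ[k] h'))
          = ∑ i ∈ rs h, ∑ j ∈ rs h',
              ∑ m ∈ rs (rg h i), ∑ n ∈ rs (rf h' j),
              ∑ p ∈ rs (rg (rg h i) m), ∑ q ∈ rs (rg (rf h' j) n),
                (a * l (rf h i) a') ⊗ₜ[k]
                  ((rf (rg h i) m * rf (rf h' j) n) ⊗ₜ[k]
                    (l (rf (rg (rg h i) m) p * rf (rg (rf h' j) n) q) b' *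
                     l (rg (rg (rg h i) m) p *
                        (rg (rg (rf h' j) n) q * HopfAlgebra.antipode (R := k) (rg h' j))) b)) := by
            rw [L1]
            exact Finset.sum_congr rfl fun i hi => Finset.sum_congr rfl fun j hj => L4 i hi j hj
        _ = ∑ i ∈ rs h, ∑ m ∈ rs (rg h i), ∑ p ∈ rs (rg (rg h i) m),
              ∑ j ∈ rs h', ∑ n ∈ rs (rf h' j), ∑ q ∈ rs (rg (rf h' j) n),
                (a * l (rf h i) a') ⊗ₜ[k]
                  ((rf (rg h i) m * rf (rf h' j) n) ⊗ₜ[k]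
                    (l (rf (rg (rg h i) m) p * rf (rg (rf h' j) n) q) b' *
                     l (rg (rg (rg h i) m) p *
                        (rg (rg (rf h' j) n) q * HopfAlgebra.antipode (R := k) (rg h' j))) b)) :=
            sum_comm6 _ _ _ _ _ _ _
        _ = ∑ i ∈ rs h, ∑ m ∈ rs (rg h i), ∑ p ∈ rs (rg (rg h i) m), ∑ j ∈ rs h',
              (a * l (rf h i) a') ⊗ₜ[k]
                ((rf (rg h i) m * rf h' j) ⊗ₜ[k]
                  (l (rf (rg (rg h i) m) p * rg h' j) b' * l (rg (rg (rg h i) m) p) b)) :=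
            Finset.sum_congr rfl fun i _ => Finset.sum_congr rfl fun m _ =>
              Finset.sum_congr rfl fun p _ =>
                SA (rf h i) (rf (rg h i) m) (rf (rg (rg h i) m) p) (rg (rg (rg h i) m) p)
        _ = ∑ j ∈ rs h', ∑ i ∈ rs h, ∑ m ∈ rs (rg h i), ∑ p ∈ rs (rg (rg h i) m),
              (a * l (rf h i) a') ⊗ₜ[k]
                ((rf (rg h i) m * rf h' j) ⊗ₜ[k]
                  (l (rf (rg (rg h i) m) p * rg h' j) b' * l (rg (rg (rg h i) m) p) b)) :=
            sum_comm4 _ _ _ _ _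
        _ = ∑ j ∈ rs h', ∑ i ∈ rs h, ∑ m ∈ rs (rf h i), ∑ p ∈ rs (rg (rf h i) m),
              (a * l (rf (rf h i) m) a') ⊗ₜ[k]
                ((rf (rg (rf h i) m) p * rf h' j) ⊗ₜ[k]
                  (l (rg (rg (rf h i) m) p * rg h' j) b' * l (rg h i) b)) :=
            Finset.sum_congr rfl fun j _ => SB j
        _ = ∑ i ∈ rs h, ∑ j ∈ rs h', ∑ m ∈ rs (rf h i), ∑ p ∈ rs (rg (rf h i) m),
              (a * l (rf (rf h i) m) a') ⊗ₜ[k]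
                ((rf (rg (rf h i) m) p * rf h' j) ⊗ₜ[k]
                  (l (rg (rg (rf h i) m) p * rg h' j) b' * l (rg h i) b)) :=
            Finset.sum_comm
        _ = mulCM (Φ ((a ⊗ₜ[k] b) ⊗ₜ[k] h)) (Φ ((a' ⊗ₜ[k] b') ⊗ₜ[k] h')) := by
            rw [R1]
            exact Finset.sum_congr rfl fun i hi => Finset.sum_congr rfl fun j hj =>
              (R2 i hi j hj).symm
    intro x y
    induction x using TensorProduct.induction_on with
    | zero => simp
    | add u v hu hv => simp only [map_add, LinearMap.add_apply, hu, hv]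
    | tmul p hx =>
      induction p using TensorProduct.induction_on with
      | zero => rw [TensorProduct.zero_tmul]; simp
      | add u v hu hv =>
        rw [TensorProduct.add_tmul]
        simp only [map_add, LinearMap.add_apply, hu, hv]
      | tmul a b =>
        induction y using TensorProduct.induction_on with
        | zero => simp
        | add u v hu hv => simp only [map_add, LinearMap.add_apply, hu, hv]
        | tmul p' hy =>
          induction p' using TensorProduct.induction_on with
          | zero => rw [TensorProduct.zero_tmul]; simp
          | add u v hu hv =>
            rw [TensorProduct.add_tmul]
            simp only [map_add, LinearMap.add_apply, hu, hv]
          | tmul a' b' => exact g1 a b a' b' hx hy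
  · have h1 : Coalgebra.comul (R := k) (1 : H)
        = ∑ i ∈ ({0} : Finset ℕ), (fun _ => (1 : H)) i ⊗ₜ[k] (fun _ => (1 : H)) i := by
      simp [Algebra.TensorProduct.one_def]
    rw [hΦ 1 1 1 {0} _ _ h1]
    simp [hl_one]
  · have g3 : ∀ (a b : A) (h : H), Φ' (Φ ((a ⊗ₜ[k] b) ⊗ₜ[k] h)) = (a ⊗ₜ[k] b) ⊗ₜ[k] h := by
      intro a b h
      rw [hΦ a b h _ _ _ (hr h), map_sum]
      have step : ∀ i ∈ rs h, Φ' (a ⊗ₜ[k] (rf h i ⊗ₜ[k] l (rg h i) b))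
          = ∑ m ∈ rs (rf h i),
              (a ⊗ₜ[k] l (HopfAlgebra.antipode (R := k) (rg (rf h i) m) * rg h i) b) ⊗ₜ[k]
                rf (rf h i) m := by
        intro i _
        rw [hΦ' a (l (rg h i) b) (rf h i) _ _ _ (hr (rf h i))]
        exact Finset.sum_congr rfl fun m _ => by rw [hl_mul]
      rw [Finset.sum_congr rfl step]
      have key := congrArg
        (LinearMap.rTensor H (TensorProduct.mk k A A a) ∘ₗ
          (TensorProduct.comm k H A).toLinearMap ∘ₗ LinearMap.lTensor H (l.flip b))
        (sCollapse h (rs h) (rf h) (rg h) (hr h) (fun i => rs (rf h i))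
          (fun i m => rf (rf h i) m) (fun i m => rg (rf h i) m) (fun i _ => hr (rf h i)))
      simp only [map_sum, LinearMap.coe_comp, Function.comp_apply, LinearMap.lTensor_tmul,
        LinearEquiv.coe_coe, TensorProduct.comm_tmul, LinearMap.rTensor_tmul,
        TensorProduct.mk_apply, LinearMap.flip_apply] at key
      rw [key, hl_one]
    intro x
    induction x using TensorProduct.induction_on with
    | zero => simp
    | add u v hu hv => rw [map_add, map_add, hu, hv]
    | tmul p h =>
      induction p using TensorProduct.induction_on with
      | zero => rw [TensorProduct.zero_tmul]; simp
      | add u v hu hv => rw [TensorProduct.add_tmul, map_add, map_add, hu, hv]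
      | tmul a b => exact g3 a b h
  · have g4 : ∀ (a b : A) (h : H), Φ (Φ' (a ⊗ₜ[k] (h ⊗ₜ[k] b))) = a ⊗ₜ[k] (h ⊗ₜ[k] b) := by
      intro a b h
      rw [hΦ' a b h _ _ _ (hr h), map_sum]
      have step : ∀ i ∈ rs h,
          Φ ((a ⊗ₜ[k] l (HopfAlgebra.antipode (R := k) (rg h i)) b) ⊗ₜ[k] rf h i)
          = ∑ m ∈ rs (rf h i),
              a ⊗ₜ[k] (rf (rf h i) m ⊗ₜ[k]
                l (rg (rf h i) m * HopfAlgebra.antipode (R := k) (rg h i)) b) := by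
        intro i _
        rw [hΦ a _ (rf h i) _ _ _ (hr (rf h i))]
        exact Finset.sum_congr rfl fun m _ => by rw [hl_mul]
      rw [Finset.sum_congr rfl step]
      have key := congrArg
        (TensorProduct.mk k A (H ⊗[k] A) a ∘ₗ LinearMap.lTensor H (l.flip b))
        (sCollapse' h (rs h) (rf h) (rg h) (hr h) (fun i => rs (rf h i))
          (fun i m => rf (rf h i) m) (fun i m => rg (rf h i) m) (fun i _ => hr (rf h i)))
      simp only [map_sum, LinearMap.coe_comp, Function.comp_apply, LinearMap.lTensor_tmul,
        TensorProduct.mk_apply, LinearMap.flip_apply] at key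
      rw [key, hl_one]
    intro y
    induction y using TensorProduct.induction_on with
    | zero => simp
    | add u v hu hv => rw [map_add, map_add, hu, hv]
    | tmul a z =>
      induction z using TensorProduct.induction_on with
      | zero => rw [TensorProduct.tmul_zero]; simp
      | add u v hu hv => rw [TensorProduct.tmul_add, map_add, map_add, hu, hv]
      | tmul h b => exact g4 a b h
end

section
/- In Kadison's algebra A^e ◇ H, the source map s(a) = (a⊗1)⊗1 is an algebra homomorphism A → A^e ◇ H, the target map t(a) = (1⊗a)⊗1 is an algebra anti-homomorphism A → A^e ◇ H, and their images commute: s(a)t(b) = t(b)s(a) for all a,b ∈ A. -/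
open scoped TensorProduct
open Finset

lemma antipode_one' (k H : Type) [Field k] [Ring H] [HopfAlgebra k H] :
    HopfAlgebra.antipode (R := k) (1 : H) = 1 := by
  have := HopfAlgebra.mul_antipode_rTensor_comul_apply (R := k) (A := H) 1
  simpa [Algebra.TensorProduct.one_def] using this

/-- in Kadison's algebra `A^e ◇ H`, the source map `s(a) = (a⊗1)⊗1` is an
algebra homomorphism, the target map `t(a) = (1⊗a)⊗1` is an algebra anti-homomorphism,
and their images commute. -/
theorem stmt_9 (k H A : Type) [Field k] [Ring H] [HopfAlgebra k H]
    [Ring A] [Algebra k A]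
    (hbij : Function.Bijective (HopfAlgebra.antipode (R := k) (A := H)))
    (l : H →ₗ[k] A →ₗ[k] A)
    (hl_one : ∀ a : A, l 1 a = a)
    (hl_mul : ∀ (h h' : H) (a : A), l (h * h') a = l h (l h' a))
    (hl_unit : ∀ h : H, l h (1 : A) = Coalgebra.counit (R := k) h • (1 : A))
    (hl_meas : ∀ (h : H) (a b : A) (s : Finset ℕ) (f g : ℕ → H),
      Coalgebra.comul (R := k) h = ∑ i ∈ s, f i ⊗ₜ[k] g i →
      l h (a * b) = ∑ i ∈ s, l (f i) a * l (g i) b)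
    (mulK : ((A ⊗[k] A) ⊗[k] H) →ₗ[k] ((A ⊗[k] A) ⊗[k] H) →ₗ[k] ((A ⊗[k] A) ⊗[k] H))
    (hK : ∀ (a b a' b' : A) (h h' : H) (s t : Finset ℕ) (f g f' g' : ℕ → H),
      Coalgebra.comul (R := k) h = ∑ i ∈ s, f i ⊗ₜ[k] g i →
      Coalgebra.comul (R := k) h' = ∑ j ∈ t, f' j ⊗ₜ[k] g' j →
      mulK ((a ⊗ₜ[k] b) ⊗ₜ[k] h) ((a' ⊗ₜ[k] b') ⊗ₜ[k] h') =
        ∑ i ∈ s, ∑ j ∈ t,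
          ((a * l (f i) a') ⊗ₜ[k] (b' * l (HopfAlgebra.antipode (R := k) (g' j)) b)) ⊗ₜ[k] (g i * f' j))
    :
    (∀ a b : A, mulK ((a ⊗ₜ[k] (1 : A)) ⊗ₜ[k] (1 : H)) ((b ⊗ₜ[k] (1 : A)) ⊗ₜ[k] (1 : H)) =
      ((a * b) ⊗ₜ[k] (1 : A)) ⊗ₜ[k] (1 : H)) ∧
    (∀ a b : A, mulK (((1 : A) ⊗ₜ[k] a) ⊗ₜ[k] (1 : H)) (((1 : A) ⊗ₜ[k] b) ⊗ₜ[k] (1 : H)) =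
      ((1 : A) ⊗ₜ[k] (b * a)) ⊗ₜ[k] (1 : H)) ∧
    (∀ a b : A, mulK ((a ⊗ₜ[k] (1 : A)) ⊗ₜ[k] (1 : H)) (((1 : A) ⊗ₜ[k] b) ⊗ₜ[k] (1 : H)) =
      mulK (((1 : A) ⊗ₜ[k] b) ⊗ₜ[k] (1 : H)) ((a ⊗ₜ[k] (1 : A)) ⊗ₜ[k] (1 : H))) := by
  have hcom : Coalgebra.comul (R := k) (1 : H) =
      ∑ i ∈ ({0} : Finset ℕ), (fun _ : ℕ => (1 : H)) i ⊗ₜ[k] (fun _ : ℕ => (1 : H)) i := by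
    simp [Algebra.TensorProduct.one_def]
  have key : ∀ a b a' b' : A,
      mulK ((a ⊗ₜ[k] b) ⊗ₜ[k] (1 : H)) ((a' ⊗ₜ[k] b') ⊗ₜ[k] (1 : H)) =
        ((a * a') ⊗ₜ[k] (b' * b)) ⊗ₜ[k] (1 : H) := by
    intro a b a' b'
    rw [hK a b a' b' 1 1 {0} {0} _ _ _ _ hcom hcom]
    simp [antipode_one' k H, hl_one]
  refine ⟨fun a b => by rw [key]; simp, fun a b => by rw [key]; simp,
    fun a b => by rw [key, key]; simp⟩
end
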